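/- arXiv:1806.05209 — 11 statements merged into one kernel-verified Lean document; each statement's English description precedes it below -/
import Mathlib

section
/- Let σ be a finite type, R a commutative ring, and S an additive submonoid of the monoid ℕ^σ of exponent vectors. Let f be a multivariate formal power series in MvPowerSeries σ R whose constant coefficient is a unit of R. Then there exists a unique power series g ∈ MvPowerSeries σ R such that (i) g is supported on S (the coefficient of g at every exponent vector d ∉ S is 0), and (ii) the restriction of f·g to S equals 1, i.e. the coefficient of f·g at 0 is 1 and the coefficient of f·g at every nonzero d ∈ S is 0. Moreover, the constant coefficient of this g is a unit of R. -/
/-!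
Write `u` for an inverse of the constant coefficient of `f`. For `n ∈ S` the equation
`coeff n (f * g) = coeff n 1` reads `f₀ gₙ + ∑_{a + b = n, b < n} f_a g_b = δₙ`, so it determines
`gₙ = u (δₙ - ∑_{a + b = n, b < n} f_a g_b)` from the coefficients of `g` strictly below `n`,
while `gₙ = 0` for `n ∉ S`. Since `<` on `σ →₀ ℕ` is well founded, such a recursion has exactly
one solution. Its constant coefficient is a unit because `f₀ g₀ = 1`.
-/

open Finset.HasAntidiagonal

theorem WellFoundedLT.existsUnique_forall_eq_of_eqOn_Iio {α β : Type*} [Preorder α]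
    [WellFoundedLT α] [Nonempty β] (F : α → (α → β) → β)
    (hF : ∀ n g g', Set.EqOn g g' (Set.Iio n) → F n g = F n g') :
    ∃! g : α → β, ∀ n, g n = F n g := by
  classical
  let ind n (ih : ∀ m < n, β) := F n fun m => if h : m < n then ih m h else Classical.arbitrary β
  have hfix : ∀ n, fix ind n = F n (fix ind) := fun n => by
    rw [fix_eq]
    exact hF n _ _ fun m (hm : m < n) => by simp [hm]
  refine ⟨fix ind, hfix, fun g hg => funext fun n => ?_⟩
  induction n using WellFoundedLT.induction with
  | _ n ih => rw [hg, hfix, hF n g _ ih]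

theorem Finset.HasAntidiagonal.snd_lt_of_mem_erase {A : Type*} [AddCommMonoid A]
    [IsRightCancelAdd A] [PartialOrder A] [CanonicallyOrderedAdd A] [HasAntidiagonal A]
    [DecidableEq A] {n : A} {p : A × A} (hp : p ∈ (antidiagonal n).erase (0, n)) : p.2 < n := by
  obtain ⟨hne, hp⟩ := Finset.mem_erase.mp hp
  refine (antidiagonal.snd_le hp).lt_of_ne fun h => hne (Prod.ext ?_ h)
  rw [mem_antidiagonal, h] at hp
  exact add_eq_right.mp hp

namespace MvPowerSeries

variable {σ R : Type*} [CommRing R]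

theorem coeff_mul_eq_constantCoeff_mul_add_sum [DecidableEq σ] (f g : MvPowerSeries σ R)
    (n : σ →₀ ℕ) :
    coeff n (f * g) = constantCoeff f * coeff n g +
      ∑ p ∈ (antidiagonal n).erase (0, n), coeff p.1 f * coeff p.2 g := by
  rw [coeff_mul, ← Finset.add_sum_erase _ _ (a := (0, n)) (mem_antidiagonal.mpr (zero_add n)),
    coeff_zero_eq_constantCoeff]

variable (S : AddSubmonoid (σ →₀ ℕ)) (f : MvPowerSeries σ R)

def IsRelInverse (g : MvPowerSeries σ R) : Prop :=
  (∀ d ∉ S, coeff d g = 0) ∧ ∀ d ∈ S, coeff d (f * g) = coeff d 1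

/-- The value of `coeff n g` forced by `IsRelInverse S f g`, when `u` inverts `constantCoeff f`. -/
noncomputable def relInverseStep [DecidableEq σ] [DecidablePred (· ∈ S)] (u : R) (n : σ →₀ ℕ)
    (g : MvPowerSeries σ R) : R :=
  if n ∈ S then u * (coeff n 1 - ∑ p ∈ (antidiagonal n).erase (0, n), coeff p.1 f * coeff p.2 g)
  else 0

variable {S f}

theorem relInverseStep_congr [DecidableEq σ] [DecidablePred (· ∈ S)] (u : R) {n : σ →₀ ℕ}
    {g g' : MvPowerSeries σ R} (h : Set.EqOn g g' (Set.Iio n)) :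
    relInverseStep S f u n g = relInverseStep S f u n g' := by
  have hsum : ∑ p ∈ (antidiagonal n).erase (0, n), coeff p.1 f * coeff p.2 g =
      ∑ p ∈ (antidiagonal n).erase (0, n), coeff p.1 f * coeff p.2 g' :=
    Finset.sum_congr rfl fun p hp => congrArg _ (h (snd_lt_of_mem_erase hp))
  rw [relInverseStep, relInverseStep, hsum]

theorem isRelInverse_iff_forall_coeff_eq [DecidableEq σ] [DecidablePred (· ∈ S)] {u : R}
    (hu : constantCoeff f * u = 1) {g : MvPowerSeries σ R} :
    IsRelInverse S f g ↔ ∀ n, coeff n g = relInverseStep S f u n g := by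
  simp only [IsRelInverse, relInverseStep, ← forall_and]
  refine forall_congr' fun n => ?_
  by_cases hn : n ∈ S
  · simp only [hn, not_true_eq_false, false_imp_iff, true_imp_iff, true_and, if_true,
      coeff_mul_eq_constantCoeff_mul_add_sum]
    generalize ∑ p ∈ (antidiagonal n).erase (0, n), coeff p.1 f * coeff p.2 g = s
    constructor
    · intro h
      linear_combination u * h - coeff n g * hu
    · intro h
      linear_combination constantCoeff f * h + (coeff n 1 - s) * hu
  · simp [hn]

theorem IsRelInverse.isUnit_constantCoeff {g : MvPowerSeries σ R} (h : IsRelInverse S f g) :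
    IsUnit (constantCoeff g) := by
  refine IsUnit.of_mul_eq_one_right (constantCoeff f) ?_
  simpa [coeff_zero_eq_constantCoeff_apply] using h.2 0 S.zero_mem

theorem isRelInverse_iff {g : MvPowerSeries σ R} :
    IsRelInverse S f g ↔ (∀ d ∉ S, coeff d g = 0) ∧ coeff 0 (f * g) = 1 ∧
      ∀ d ∈ S, d ≠ 0 → coeff d (f * g) = 0 := by
  classical
  refine and_congr_right fun _ => ⟨fun h => ⟨?_, fun d hd hd0 => ?_⟩, fun ⟨h0, h⟩ d hd => ?_⟩
  · simpa using h 0 S.zero_mem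
  · simpa [coeff_one, hd0] using h d hd
  · rcases eq_or_ne d 0 with rfl | hd0
    · simpa using h0
    · simpa [coeff_one, hd0] using h d hd hd0

theorem existsUnique_isRelInverse (hf : IsUnit (constantCoeff f)) :
    ∃! g, IsRelInverse S f g := by
  classical
  obtain ⟨u, hu⟩ := hf.exists_right_inv
  simp_rw [isRelInverse_iff_forall_coeff_eq hu]
  exact WellFoundedLT.existsUnique_forall_eq_of_eqOn_Iio _ fun n _ _ => relInverseStep_congr u

end MvPowerSeries

theorem stmt_0_general (σ : Type*) (R : Type*) [CommRing R]
    (S : AddSubmonoid (σ →₀ ℕ)) (f : MvPowerSeries σ R)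
    (hf : IsUnit (MvPowerSeries.constantCoeff f)) :
    (∃! g : MvPowerSeries σ R,
      (∀ d : σ →₀ ℕ, d ∉ S → MvPowerSeries.coeff d g = 0) ∧
      MvPowerSeries.coeff 0 (f * g) = 1 ∧
      (∀ d : σ →₀ ℕ, d ∈ S → d ≠ 0 → MvPowerSeries.coeff d (f * g) = 0)) ∧
    (∀ g : MvPowerSeries σ R,
      ((∀ d : σ →₀ ℕ, d ∉ S → MvPowerSeries.coeff d g = 0) ∧
        MvPowerSeries.coeff 0 (f * g) = 1 ∧
        (∀ d : σ →₀ ℕ, d ∈ S → d ≠ 0 → MvPowerSeries.coeff d (f * g) = 0)) →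
      IsUnit (MvPowerSeries.constantCoeff g)) := by
  simp only [← MvPowerSeries.isRelInverse_iff]
  exact ⟨MvPowerSeries.existsUnique_isRelInverse hf,
    fun _ => MvPowerSeries.IsRelInverse.isUnit_constantCoeff⟩

/-- **Relative inverse** (Proposition 2.1): for a multivariate power series `f` over a
commutative ring `R` whose constant coefficient is a unit, and an additive submonoid `S`
of exponent vectors, there is a unique power series `g` supported on `S` such that
`(f * g)|_S = 1`; moreover the constant coefficient of `g` is a unit. -/
theorem stmt_0 (σ : Type*) [Fintype σ] (R : Type*) [CommRing R]
    (S : AddSubmonoid (σ →₀ ℕ)) (f : MvPowerSeries σ R)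
    (hf : IsUnit (MvPowerSeries.constantCoeff f)) :
    (∃! g : MvPowerSeries σ R,
      (∀ d : σ →₀ ℕ, d ∉ S → MvPowerSeries.coeff d g = 0) ∧
      MvPowerSeries.coeff 0 (f * g) = 1 ∧
      (∀ d : σ →₀ ℕ, d ∈ S → d ≠ 0 → MvPowerSeries.coeff d (f * g) = 0)) ∧
    (∀ g : MvPowerSeries σ R,
      ((∀ d : σ →₀ ℕ, d ∉ S → MvPowerSeries.coeff d g = 0) ∧
        MvPowerSeries.coeff 0 (f * g) = 1 ∧
        (∀ d : σ →₀ ℕ, d ∈ S → d ≠ 0 → MvPowerSeries.coeff d (f * g) = 0)) →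
      IsUnit (MvPowerSeries.constantCoeff g)) :=
  stmt_0_general σ R S f hf
end

section
/- Let σ be a finite type and let f ∈ MvPowerSeries σ ℤ[t] (multivariate power series with coefficients in the polynomial ring ℤ[t]) have constant coefficient 1. Then there exists a unique function m assigning to each nonzero exponent vector λ ∈ ℕ^σ a finitely supported function m(λ,·) : ℕ → ℤ such that f = ∏_{λ ≠ 0} ∏_{n ≥ 0} (1 − tⁿX^λ)^{m(λ,n)} in the coefficientwise sense: for every exponent vector d, the coefficient of X^d in f equals the coefficient of X^d in the finite product over all nonzero λ with λ ≤ d (componentwise) and all n in the support of m(λ,·) of (1 − tⁿX^λ)^{m(λ,n)}, where negative integer powers are interpreted via inverses in the power series ring (each 1 − tⁿX^λ is invertible since its constant coefficient in the X-variables is 1 ∈ ℤ[t]). -/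
/-!
Call a power series `g` *equal to one below* `λ` if its coefficients at all `b < λ` are those of
`1`. Such series are closed under products and inverses, and for them the coefficient at `X^λ` is
additive: `[X^λ](g h) = [X^λ] g + [X^λ] h` whenever `h` has constant coefficient `1`, since in
`∑_{a + c = λ} g_a h_c` only `a = 0` and `a = λ` survive. Each `1 - tⁿ X^λ` is equal to one below
`λ`, so the factor `∏ₙ (1 - tⁿ X^λ)^{m(λ,n)}` has coefficient `-∑ₙ m(λ,n) tⁿ` at `X^λ`. Hence the
coefficient of `X^d` in the product over `0 < λ ≤ d` is `-∑ₙ m(d,n) tⁿ` plus that of the product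
over `0 < λ < d`: the equation at `d` determines `m d` from the `m λ` with `λ < d`, which gives
existence by well-founded recursion on `d` and uniqueness by well-founded induction.
-/

/-- Integer powers of a multivariate power series whose constant coefficient is `1`:
nonnegative powers are ordinary powers, negative powers are powers of the inverse
`MvPowerSeries.invOfUnit f 1`. -/
noncomputable def zpowSeries {σ : Type*} {R : Type*} [CommRing R]
    (f : MvPowerSeries σ R) (n : ℤ) : MvPowerSeries σ R :=
  if 0 ≤ n then f ^ n.toNat else (MvPowerSeries.invOfUnit f 1) ^ (-n).toNat

open Finset

namespace MvPowerSeries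

variable {σ R : Type*} [CommRing R]

def EqOneBelow (lam : σ →₀ ℕ) (g : MvPowerSeries σ R) : Prop :=
  ∀ b < lam, coeff b g = coeff b 1

namespace EqOneBelow

variable {lam : σ →₀ ℕ} {g h : MvPowerSeries σ R}

theorem constantCoeff_eq_one (hg : EqOneBelow lam g) (hlam : lam ≠ 0) : constantCoeff g = 1 := by
  simpa using hg 0 (pos_iff_ne_zero.mpr hlam)

theorem coeff_mul_of_lt (hg : EqOneBelow lam g) {b : σ →₀ ℕ} (hb : b < lam) :
    coeff b (g * h) = coeff b h := by
  classical
  rw [MvPowerSeries.coeff_mul, sum_eq_single (0, b)]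
  · rw [hg 0 (lt_of_le_of_lt zero_le hb)]
    simp
  · rintro ⟨a, c⟩ habc hne
    have ha : a ≠ 0 := by
      rintro rfl
      simp_all
    rw [HasAntidiagonal.mem_antidiagonal] at habc
    rw [hg a ((le_add_right le_rfl).trans_eq habc |>.trans_lt hb), coeff_one, if_neg ha, zero_mul]
  · simp

theorem one : EqOneBelow lam (1 : MvPowerSeries σ R) := fun _ _ => rfl

theorem mul (hg : EqOneBelow lam g) (hh : EqOneBelow lam h) : EqOneBelow lam (g * h) :=
  fun b hb => (hg.coeff_mul_of_lt hb).trans (hh b hb)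

theorem pow (hg : EqOneBelow lam g) (k : ℕ) : EqOneBelow lam (g ^ k) := by
  induction k with
  | zero => simpa using one
  | succ k ih => simpa [pow_succ] using ih.mul hg

theorem of_mul_eq_one (hg : EqOneBelow lam g) (hgh : g * h = 1) : EqOneBelow lam h :=
  fun b hb => by rw [← hg.coeff_mul_of_lt hb, hgh]

theorem invOfUnit (hg : EqOneBelow lam g) (hlam : lam ≠ 0) : EqOneBelow lam (invOfUnit g 1) :=
  hg.of_mul_eq_one (mul_invOfUnit g 1 (by simpa using hg.constantCoeff_eq_one hlam))

theorem zpowSeries (hg : EqOneBelow lam g) (hlam : lam ≠ 0) (z : ℤ) :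
    EqOneBelow lam (zpowSeries g z) := by
  unfold _root_.zpowSeries
  split
  · exact hg.pow _
  · exact (hg.invOfUnit hlam).pow _

theorem coeff_mul_eq_add (hg : EqOneBelow lam g) (hlam : lam ≠ 0) (hh : constantCoeff h = 1) :
    coeff lam (g * h) = coeff lam g + coeff lam h := by
  classical
  rw [MvPowerSeries.coeff_mul, sum_eq_add (0, lam) (lam, 0) (by simpa [eq_comm] using hlam)]
  · simp [hg.constantCoeff_eq_one hlam, hh, add_comm]
  · rintro ⟨a, c⟩ habc ⟨h0, hlam'⟩
    rw [HasAntidiagonal.mem_antidiagonal] at habc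
    have ha0 : a ≠ 0 := by rintro rfl; simp_all
    have hac : a ≠ lam := by rintro rfl; simp_all
    rw [hg a (lt_of_le_of_ne (habc ▸ le_add_right le_rfl) hac), coeff_one, if_neg ha0, zero_mul]
  · simp
  · simp

theorem coeff_pow (hg : EqOneBelow lam g) (hlam : lam ≠ 0) (k : ℕ) :
    coeff lam (g ^ k) = k • coeff lam g := by
  induction k with
  | zero => classical simp [coeff_one, hlam]
  | succ k ih =>
    rw [pow_succ', hg.coeff_mul_eq_add hlam ((hg.pow k).constantCoeff_eq_one hlam), ih, succ_nsmul']

theorem coeff_invOfUnit (hg : EqOneBelow lam g) (hlam : lam ≠ 0) :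
    coeff lam (MvPowerSeries.invOfUnit g 1) = -coeff lam g := by
  classical
  have hinv : g * MvPowerSeries.invOfUnit g 1 = 1 :=
    mul_invOfUnit g 1 (by simpa using hg.constantCoeff_eq_one hlam)
  have := congr_arg (coeff lam) hinv
  rw [hg.coeff_mul_eq_add hlam ((hg.invOfUnit hlam).constantCoeff_eq_one hlam), coeff_one,
    if_neg hlam] at this
  exact eq_neg_of_add_eq_zero_right this

theorem coeff_zpowSeries (hg : EqOneBelow lam g) (hlam : lam ≠ 0) (z : ℤ) :
    coeff lam (_root_.zpowSeries g z) = z • coeff lam g := by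
  unfold _root_.zpowSeries
  split_ifs with hz
  · rw [hg.coeff_pow hlam, ← natCast_zsmul, Int.toNat_of_nonneg hz]
  · rw [(hg.invOfUnit hlam).coeff_pow hlam, hg.coeff_invOfUnit hlam, ← natCast_zsmul,
      Int.toNat_of_nonneg (by omega), smul_neg, neg_smul, neg_neg]

theorem coeff_prod {ι : Type*} {s : Finset ι} {F : ι → MvPowerSeries σ R}
    (hF : ∀ i ∈ s, EqOneBelow lam (F i)) (hlam : lam ≠ 0) :
    coeff lam (∏ i ∈ s, F i) = ∑ i ∈ s, coeff lam (F i) := by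
  classical
  induction s using Finset.induction_on with
  | empty => simp [coeff_one, hlam]
  | insert a s ha ih =>
    have hs : EqOneBelow lam (∏ i ∈ s, F i) :=
      prod_induction _ _ (fun _ _ => mul) one fun i hi => hF i (mem_insert_of_mem hi)
    rw [prod_insert ha, sum_insert ha, (hF a (mem_insert_self a s)).coeff_mul_eq_add hlam
      (hs.constantCoeff_eq_one hlam), ih fun i hi => hF i (mem_insert_of_mem hi)]

end EqOneBelow

theorem eqOneBelow_one_sub_monomial (lam : σ →₀ ℕ) (p : R) :
    EqOneBelow lam (1 - monomial lam p) := fun b hb => by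
  classical
  rw [map_sub, coeff_monomial, if_neg hb.ne, sub_zero]

end MvPowerSeries

open MvPowerSeries

section ProductForm

variable {σ : Type*}

noncomputable def productFormFactor (lam : σ →₀ ℕ) (v : ℕ →₀ ℤ) : MvPowerSeries σ (Polynomial ℤ) :=
  ∏ n ∈ v.support, zpowSeries (1 - monomial lam (Polynomial.X ^ n)) (v n)

theorem eqOneBelow_productFormFactor {lam : σ →₀ ℕ} (hlam : lam ≠ 0) (v : ℕ →₀ ℤ) :
    EqOneBelow lam (productFormFactor lam v) :=
  prod_induction _ _ (fun _ _ => EqOneBelow.mul) EqOneBelow.one fun _ _ =>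
    (eqOneBelow_one_sub_monomial lam _).zpowSeries hlam _

theorem coeff_coeff_productFormFactor {lam : σ →₀ ℕ} (hlam : lam ≠ 0) (v : ℕ →₀ ℤ) (k : ℕ) :
    (coeff lam (productFormFactor lam v)).coeff k = -v k := by
  classical
  rw [productFormFactor, EqOneBelow.coeff_prod
    (fun _ _ => (eqOneBelow_one_sub_monomial lam _).zpowSeries hlam _) hlam]
  simp [(eqOneBelow_one_sub_monomial lam _).coeff_zpowSeries hlam, coeff_one, hlam,
    Polynomial.coeff_X_pow, eq_comm]

open scoped Classical

theorem coeff_prod_productFormFactor_Iic {d : σ →₀ ℕ} (hd : d ≠ 0) (m : (σ →₀ ℕ) → ℕ →₀ ℤ) :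
    coeff d (∏ lam ∈ (Iic d).erase 0, productFormFactor lam (m lam)) =
      coeff d (productFormFactor d (m d)) +
        coeff d (∏ lam ∈ (Iio d).erase 0, productFormFactor lam (m lam)) := by
  have hsplit : (Iic d).erase 0 = insert d ((Iio d).erase 0) := by
    rw [← Iio_insert, erase_insert_of_ne hd]
  have hconst : constantCoeff (∏ lam ∈ (Iio d).erase 0, productFormFactor lam (m lam)) = 1 := by
    rw [map_prod]
    exact prod_eq_one fun lam hlam =>
      (eqOneBelow_productFormFactor (ne_of_mem_erase hlam) _).constantCoeff_eq_one
        (ne_of_mem_erase hlam)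
  rw [hsplit, prod_insert (by simp), (eqOneBelow_productFormFactor hd _).coeff_mul_eq_add hd hconst]

theorem coeff_eq_coeff_prod_productFormFactor_iff {f : MvPowerSeries σ (Polynomial ℤ)}
    {d : σ →₀ ℕ} (hd : d ≠ 0) (m : (σ →₀ ℕ) → ℕ →₀ ℤ) :
    coeff d f = coeff d (∏ lam ∈ (Iic d).erase 0, productFormFactor lam (m lam)) ↔
      m d = (coeff d (∏ lam ∈ (Iio d).erase 0, productFormFactor lam (m lam)) -
        coeff d f).toFinsupp.coeff := by
  rw [coeff_prod_productFormFactor_Iic hd]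
  constructor
  · intro h
    ext k
    simp [Polynomial.toFinsupp_apply, h, coeff_coeff_productFormFactor hd]
  · intro h
    ext k
    simp [h, coeff_coeff_productFormFactor hd, Polynomial.toFinsupp_apply]

attribute [local instance] WellFoundedLT.toWellFoundedRelation in
noncomputable def productFormExponent (f : MvPowerSeries σ (Polynomial ℤ)) (d : σ →₀ ℕ) :
    ℕ →₀ ℤ :=
  if d = 0 then 0 else
    (coeff d (∏ lam ∈ ((Iio d).erase 0).attach,
        productFormFactor lam.1 (productFormExponent f lam.1)) - coeff d f).toFinsupp.coeff
termination_by d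
decreasing_by exact mem_Iio.mp (mem_of_mem_erase lam.2)

theorem productFormExponent_zero (f : MvPowerSeries σ (Polynomial ℤ)) :
    productFormExponent f 0 = 0 := by
  rw [productFormExponent, if_pos rfl]

theorem productFormExponent_of_ne_zero (f : MvPowerSeries σ (Polynomial ℤ)) {d : σ →₀ ℕ}
    (hd : d ≠ 0) :
    productFormExponent f d =
      (coeff d (∏ lam ∈ (Iio d).erase 0, productFormFactor lam (productFormExponent f lam)) -
        coeff d f).toFinsupp.coeff := by
  rw [productFormExponent, if_neg hd,
    prod_attach ((Iio d).erase 0) fun lam => productFormFactor lam (productFormExponent f lam)]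

theorem coeff_eq_coeff_prod_productFormExponent {f : MvPowerSeries σ (Polynomial ℤ)}
    (hf : constantCoeff f = 1) (d : σ →₀ ℕ) :
    coeff d f = coeff d (∏ lam ∈ (Iic d).erase 0,
      productFormFactor lam (productFormExponent f lam)) := by
  rcases eq_or_ne d 0 with rfl | hd
  · have hempty : (Iic (0 : σ →₀ ℕ)).erase 0 = ∅ := (erase_eq_empty_iff _ _).mpr (.inr Iic_bot)
    rw [hempty, prod_empty, coeff_zero_eq_constantCoeff, hf, map_one]
  · exact (coeff_eq_coeff_prod_productFormFactor_iff hd _).mpr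
      (productFormExponent_of_ne_zero f hd)

theorem eq_productFormExponent {f : MvPowerSeries σ (Polynomial ℤ)}
    {m : (σ →₀ ℕ) → ℕ →₀ ℤ} (h0 : m 0 = 0)
    (hm : ∀ d, coeff d f = coeff d (∏ lam ∈ (Iic d).erase 0, productFormFactor lam (m lam))) :
    m = productFormExponent f := by
  funext d
  induction d using WellFoundedLT.induction with
  | _ d ih =>
    rcases eq_or_ne d 0 with rfl | hd
    · rw [h0, productFormExponent_zero]
    · rw [(coeff_eq_coeff_prod_productFormFactor_iff hd m).mp (hm d),
        productFormExponent_of_ne_zero f hd,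
        prod_congr rfl fun lam hlam => by rw [ih lam (mem_Iio.mp (mem_of_mem_erase hlam))]]

end ProductForm

open Classical in
theorem stmt_2_general (σ : Type*)
    (f : MvPowerSeries σ (Polynomial ℤ))
    (hf : MvPowerSeries.constantCoeff (σ := σ) (R := Polynomial ℤ) f = 1) :
    ∃! m : (σ →₀ ℕ) → (ℕ →₀ ℤ),
      m 0 = 0 ∧
      ∀ d : σ →₀ ℕ, MvPowerSeries.coeff (R := Polynomial ℤ) d f =
        MvPowerSeries.coeff (R := Polynomial ℤ) d
          (∏ lam ∈ (Finset.Iic d).erase 0, ∏ n ∈ (m lam).support,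
            zpowSeries (1 - MvPowerSeries.monomial (R := Polynomial ℤ) lam (Polynomial.X ^ n))
              (m lam n)) :=
  ⟨productFormExponent f, ⟨productFormExponent_zero f, coeff_eq_coeff_prod_productFormExponent hf⟩,
    fun _ hm => eq_productFormExponent hm.1 hm.2⟩

open Classical in
/-- **Unique product form over ℤ[t]** (Proposition 2.2, ℤ[t]-coefficient case): every
multivariate power series over `ℤ[t]` with constant coefficient `1` can be written
uniquely as `∏_{λ ≠ 0} ∏_{n ≥ 0} (1 - tⁿ X^λ)^{m(λ,n)}`, interpreted coefficientwise:
the coefficient at `d` equals the coefficient at `d` of the finite product over nonzero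
`λ ≤ d` and `n` in the support of the finitely supported function `m λ : ℕ →₀ ℤ`.
(The family `m` is normalized by `m 0 = 0`.) -/
theorem stmt_2 (σ : Type*) [Fintype σ]
    (f : MvPowerSeries σ (Polynomial ℤ))
    (hf : MvPowerSeries.constantCoeff (σ := σ) (R := Polynomial ℤ) f = 1) :
    ∃! m : (σ →₀ ℕ) → (ℕ →₀ ℤ),
      m 0 = 0 ∧
      ∀ d : σ →₀ ℕ, MvPowerSeries.coeff (R := Polynomial ℤ) d f =
        MvPowerSeries.coeff (R := Polynomial ℤ) d
          (∏ lam ∈ (Finset.Iic d).erase 0, ∏ n ∈ (m lam).support,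
            zpowSeries (1 - MvPowerSeries.monomial (R := Polynomial ℤ) lam (Polynomial.X ^ n))
              (m lam n)) :=
  stmt_2_general σ f hf
end

section
/- Let σ be a finite type and let f be a multivariate power series in MvPowerSeries σ R where R = ℤ[t,t⁻¹] is the ring of Laurent polynomials over ℤ, and suppose f has constant coefficient 1. Then there exists a unique function m assigning to each nonzero exponent vector λ ∈ ℕ^σ a finitely supported function m(λ,·) : ℤ → ℤ such that f = ∏_{λ ≠ 0} ∏_{n ∈ ℤ} (1 − tⁿX^λ)^{m(λ,n)} in the coefficientwise sense: for every exponent vector d, the coefficient of X^d in f equals the coefficient of X^d in the finite product over all nonzero λ with λ ≤ d (componentwise) and all n in the support of m(λ,·) of (1 − tⁿX^λ)^{m(λ,n)}, where negative integer powers are interpreted via inverses in the power series ring (each 1 − tⁿX^λ is invertible since its constant coefficient in the X-variables is 1 ∈ ℤ[t,t⁻¹]). -/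
open MvPowerSeries LaurentPolynomial Finset

theorem existsUnique_forall_eq_of_wellFoundedLT {α : Type*} [LT α] [WellFoundedLT α]
    {β : α → Type*} (F : ∀ a, (∀ b < a, β b) → β a) :
    ∃! m : ∀ a, β a, ∀ a, m a = F a fun b _ => m b := by
  refine ⟨wellFounded_lt.fix F, wellFounded_lt.fix_eq F, fun m hm => funext fun a => ?_⟩
  induction a using WellFoundedLT.induction with
  | _ a ih => rw [hm, wellFounded_lt.fix_eq]; congr; funext b hb; exact ih b hb

namespace MvPowerSeries

variable {σ A : Type*} [CommRing A]

theorem coeff_mul_of_forall_lt_coeff_eq_coeff_one {d : σ →₀ ℕ} (hd : d ≠ 0)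
    {g : MvPowerSeries σ A} (hg : ∀ e < d, coeff e g = coeff e 1) (h : MvPowerSeries σ A) :
    coeff d (g * h) = coeff d h + coeff d g * constantCoeff h := by
  classical
  rw [coeff_mul, sum_eq_add_of_mem (0, d) (d, 0) (by simp) (by simp) (by simp [hd])]
  · rw [hg 0 (pos_iff_ne_zero.mpr hd), coeff_zero_one, one_mul, coeff_zero_eq_constantCoeff_apply]
  · rintro ⟨p, q⟩ hpq ⟨hne0, hned⟩
    replace hpq : p + q = d := HasAntidiagonal.mem_antidiagonal.mp hpq
    have hp0 : p ≠ 0 := by rintro rfl; exact hne0 (by rw [← hpq, zero_add])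
    have hpd : p < d := lt_of_le_of_ne (hpq ▸ le_self_add) fun hpd =>
      hned (by subst hpd; rw [add_eq_left.mp hpq])
    rw [hg p hpd, coeff_one, if_neg hp0, zero_mul]

def oneBelow (lam : σ →₀ ℕ) : Submonoid (MvPowerSeries σ A) where
  carrier := {g | ∀ e < lam, coeff e g = coeff e 1}
  one_mem' _ _ := rfl
  mul_mem' {g h} hg hh e he := by
    classical
    rcases eq_or_ne e 0 with rfl | he0
    · have hg0 : constantCoeff g = 1 := by simpa using hg 0 he
      have hh0 : constantCoeff h = 1 := by simpa using hh 0 he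
      simp [hg0, hh0]
    · rw [coeff_mul_of_forall_lt_coeff_eq_coeff_one he0 (fun e' he' => hg e' (he'.trans he)),
        hg e he, hh e he, coeff_one, if_neg he0, zero_mul, add_zero]

variable {lam : σ →₀ ℕ} {g h : MvPowerSeries σ A}

theorem constantCoeff_of_mem_oneBelow (hlam : lam ≠ 0) (hg : g ∈ oneBelow lam) :
    constantCoeff g = 1 := by
  rw [← coeff_zero_eq_constantCoeff_apply, hg 0 (pos_iff_ne_zero.mpr hlam), coeff_zero_one]

theorem coeff_mul_of_mem_oneBelow (hlam : lam ≠ 0) (hg : g ∈ oneBelow lam)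
    (hh : h ∈ oneBelow lam) : coeff lam (g * h) = coeff lam g + coeff lam h := by
  rw [coeff_mul_of_forall_lt_coeff_eq_coeff_one hlam hg, constantCoeff_of_mem_oneBelow hlam hh,
    mul_one, add_comm]

theorem coeff_pow_of_mem_oneBelow (hlam : lam ≠ 0) (hg : g ∈ oneBelow lam) (n : ℕ) :
    coeff lam (g ^ n) = n • coeff lam g := by
  induction n with
  | zero => classical simp [coeff_one, hlam]
  | succ n ih => rw [pow_succ, coeff_mul_of_mem_oneBelow hlam (pow_mem hg n) hg, ih, succ_nsmul]

theorem coeff_prod_of_mem_oneBelow {ι : Type*} (hlam : lam ≠ 0) (s : Finset ι)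
    {g : ι → MvPowerSeries σ A} (hg : ∀ i ∈ s, g i ∈ oneBelow lam) :
    coeff lam (∏ i ∈ s, g i) = ∑ i ∈ s, coeff lam (g i) := by
  induction s using Finset.cons_induction with
  | empty => classical simp [coeff_one, hlam]
  | cons i s hi ih =>
    rw [prod_cons, sum_cons, coeff_mul_of_mem_oneBelow hlam (hg i (mem_cons_self i s))
      (prod_mem fun j hj => hg j (mem_cons_of_mem hj)), ih fun j hj => hg j (mem_cons_of_mem hj)]

theorem mem_oneBelow_of_mul_eq_one (hg : g ∈ oneBelow lam) (hgh : g * h = 1) :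
    h ∈ oneBelow lam := by
  classical
  intro e he
  have h1 := congrArg (coeff e) hgh
  rcases eq_or_ne e 0 with rfl | he0
  · have hg0 : constantCoeff g = 1 := by simpa using hg 0 he
    simpa [hg0] using h1
  · rw [coeff_one, if_neg he0]
    rwa [coeff_mul_of_forall_lt_coeff_eq_coeff_one he0 (fun e' he' => hg e' (he'.trans he)),
      hg e he, coeff_one, if_neg he0, zero_mul, add_zero] at h1

theorem coeff_eq_neg_of_mul_eq_one (hlam : lam ≠ 0) (hg : g ∈ oneBelow lam) (hgh : g * h = 1) :
    coeff lam h = -coeff lam g := by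
  classical
  have h1 := congrArg (coeff lam) hgh
  rw [coeff_mul_of_mem_oneBelow hlam hg (mem_oneBelow_of_mul_eq_one hg hgh), coeff_one,
    if_neg hlam] at h1
  exact eq_neg_of_add_eq_zero_right h1

end MvPowerSeries

section zpowSeries

variable {σ A : Type*} [CommRing A] {lam : σ →₀ ℕ} {g : MvPowerSeries σ A}

theorem mul_invOfUnit_of_mem_oneBelow (hlam : lam ≠ 0) (hg : g ∈ oneBelow lam) :
    g * invOfUnit g 1 = 1 :=
  mul_invOfUnit g 1 (by rw [constantCoeff_of_mem_oneBelow hlam hg, Units.val_one])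

theorem zpowSeries_mem_oneBelow (hlam : lam ≠ 0) (hg : g ∈ oneBelow lam) (n : ℤ) :
    zpowSeries g n ∈ oneBelow lam := by
  unfold zpowSeries
  split_ifs
  · exact pow_mem hg _
  · exact pow_mem (mem_oneBelow_of_mul_eq_one hg (mul_invOfUnit_of_mem_oneBelow hlam hg)) _

theorem coeff_zpowSeries_of_mem_oneBelow (hlam : lam ≠ 0) (hg : g ∈ oneBelow lam) (n : ℤ) :
    coeff lam (zpowSeries g n) = n • coeff lam g := by
  have hinv := mul_invOfUnit_of_mem_oneBelow hlam hg
  unfold zpowSeries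
  split_ifs with hn
  · rw [coeff_pow_of_mem_oneBelow hlam hg, ← natCast_zsmul, Int.toNat_of_nonneg hn]
  · rw [coeff_pow_of_mem_oneBelow hlam (mem_oneBelow_of_mul_eq_one hg hinv),
      coeff_eq_neg_of_mul_eq_one hlam hg hinv, ← natCast_zsmul, Int.toNat_of_nonneg (by omega),
      smul_neg, neg_zsmul, neg_neg]

theorem one_sub_monomial_mem_oneBelow (r : A) : 1 - monomial lam r ∈ oneBelow lam :=
  fun e he => by rw [map_sub, coeff_monomial_ne he.ne, sub_zero]

end zpowSeries

theorem LaurentPolynomial.sum_smul_T_eq_ofCoeff (c : ℤ →₀ ℤ) :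
    ∑ n ∈ c.support, c n • (T n : ℤ[T;T⁻¹]) = AddMonoidAlgebra.ofCoeff c := by
  ext m
  simp only [AddMonoidAlgebra.coeff_sum, Finsupp.finsetSum_apply,
    AddMonoidAlgebra.coeff_smul_apply, T_apply, smul_eq_mul, mul_ite, mul_one, mul_zero,
    sum_ite_eq', Finsupp.mem_support_iff]
  exact ite_eq_left_iff.mpr fun h => (not_not.mp h).symm

namespace UniqueProductForm

variable {σ : Type*}

noncomputable def eulerFactor (lam : σ →₀ ℕ) (c : ℤ →₀ ℤ) : MvPowerSeries σ ℤ[T;T⁻¹] :=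
  ∏ n ∈ c.support, zpowSeries (1 - monomial lam (T n)) (c n)

theorem eulerFactor_mem_oneBelow {lam : σ →₀ ℕ} (hlam : lam ≠ 0) (c : ℤ →₀ ℤ) :
    eulerFactor lam c ∈ oneBelow lam :=
  prod_mem fun _ _ => zpowSeries_mem_oneBelow hlam (one_sub_monomial_mem_oneBelow _) _

theorem coeff_eulerFactor_self {lam : σ →₀ ℕ} (hlam : lam ≠ 0) (c : ℤ →₀ ℤ) :
    coeff lam (eulerFactor lam c) = -AddMonoidAlgebra.ofCoeff c := by
  classical
  rw [eulerFactor, coeff_prod_of_mem_oneBelow hlam _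
      fun _ _ => zpowSeries_mem_oneBelow hlam (one_sub_monomial_mem_oneBelow _) _,
    ← sum_smul_T_eq_ofCoeff, ← sum_neg_distrib]
  refine sum_congr rfl fun n _ => ?_
  rw [coeff_zpowSeries_of_mem_oneBelow hlam (one_sub_monomial_mem_oneBelow _), map_sub,
    coeff_one, if_neg hlam, coeff_monomial_same, zero_sub, smul_neg]

open Classical in
theorem coeff_prod_eulerFactor_Iic (m : (σ →₀ ℕ) → ℤ →₀ ℤ) {d : σ →₀ ℕ} (hd : d ≠ 0) :
    coeff d (∏ lam ∈ (Iic d).erase 0, eulerFactor lam (m lam)) =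
      coeff d (∏ lam ∈ (Iio d).erase 0, eulerFactor lam (m lam)) -
        AddMonoidAlgebra.ofCoeff (m d) := by
  have hconst : constantCoeff (∏ lam ∈ (Iio d).erase 0, eulerFactor lam (m lam)) = 1 := by
    rw [map_prod]
    exact prod_eq_one fun lam hlam => constantCoeff_of_mem_oneBelow (ne_of_mem_erase hlam)
      (eulerFactor_mem_oneBelow (ne_of_mem_erase hlam) _)
  rw [← Iio_insert, erase_insert_of_ne hd, prod_insert (by simp),
    coeff_mul_of_forall_lt_coeff_eq_coeff_one hd (eulerFactor_mem_oneBelow hd (m d)), hconst,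
    coeff_eulerFactor_self hd, mul_one, sub_eq_add_neg]

variable (f : MvPowerSeries σ ℤ[T;T⁻¹])

open Classical in
noncomputable def nextExponent (d : σ →₀ ℕ) (r : ∀ lam < d, ℤ →₀ ℤ) : ℤ →₀ ℤ :=
  (coeff d (∏ lam ∈ ((Iio d).erase 0).attach,
      eulerFactor lam (r lam (mem_Iio.mp (mem_of_mem_erase lam.2)))) - coeff d f).coeff

open Classical in
theorem eq_nextExponent_iff (m : (σ →₀ ℕ) → ℤ →₀ ℤ) (d : σ →₀ ℕ) :
    m d = nextExponent f d (fun lam _ => m lam) ↔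
      coeff d f = coeff d (∏ lam ∈ (Iio d).erase 0, eulerFactor lam (m lam)) -
        AddMonoidAlgebra.ofCoeff (m d) := by
  rw [nextExponent, prod_attach ((Iio d).erase 0) fun lam => eulerFactor lam (m lam),
    eq_sub_iff_add_eq, ← eq_sub_iff_add_eq', ← AddMonoidAlgebra.coeff_inj,
    AddMonoidAlgebra.coeff_ofCoeff]

open Classical in
theorem solution_iff (hf : constantCoeff f = 1) (m : (σ →₀ ℕ) → ℤ →₀ ℤ) :
    (m 0 = 0 ∧ ∀ d, coeff d f = coeff d (∏ lam ∈ (Iic d).erase 0, eulerFactor lam (m lam))) ↔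
      ∀ d, m d = nextExponent f d fun lam _ => m lam := by
  have hIic : (Iic (0 : σ →₀ ℕ)).erase 0 = ∅ := by rw [Iic_erase, Iio_eq_empty]; exact isMin_bot
  have hIio : (Iio (0 : σ →₀ ℕ)).erase 0 = ∅ := by rw [← Iic_erase, erase_idem, hIic]
  have hf0 : coeff 0 f = 1 := by rw [coeff_zero_eq_constantCoeff_apply, hf]
  simp only [eq_nextExponent_iff]
  refine ⟨fun ⟨hm0, hm⟩ d => ?_, fun hm => ⟨?_, fun d => ?_⟩⟩
  · rcases eq_or_ne d 0 with rfl | hd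
    · rw [hIio, prod_empty, hf0, coeff_zero_one, hm0, AddMonoidAlgebra.ofCoeff_zero, sub_zero]
    · rw [hm d, coeff_prod_eulerFactor_Iic m hd]
  · have h := hm 0
    rw [hIio, prod_empty, hf0, coeff_zero_one, eq_comm, sub_eq_self] at h
    exact AddMonoidAlgebra.ofCoeff_eq_zero.mp h
  · rcases eq_or_ne d 0 with rfl | hd
    · rw [hIic, prod_empty, hf0, coeff_zero_one]
    · rw [coeff_prod_eulerFactor_Iic m hd, hm d]

end UniqueProductForm

open Classical in
theorem stmt_3_general (σ : Type*)
    (f : MvPowerSeries σ (LaurentPolynomial ℤ))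
    (hf : MvPowerSeries.constantCoeff (σ := σ) (R := LaurentPolynomial ℤ) f = 1) :
    ∃! m : (σ →₀ ℕ) → (ℤ →₀ ℤ),
      m 0 = 0 ∧
      ∀ d : σ →₀ ℕ, MvPowerSeries.coeff (R := LaurentPolynomial ℤ) d f =
        MvPowerSeries.coeff (R := LaurentPolynomial ℤ) d
          (∏ lam ∈ (Finset.Iic d).erase 0, ∏ n ∈ (m lam).support,
            zpowSeries
              (1 - MvPowerSeries.monomial (R := LaurentPolynomial ℤ) lam (LaurentPolynomial.T n))
              (m lam n)) :=
  (existsUnique_congr (UniqueProductForm.solution_iff f hf)).mpr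
    (existsUnique_forall_eq_of_wellFoundedLT _)

open Classical in
/-- **Unique product form over ℤ[t,t⁻¹]** (Proposition 2.2, Laurent-polynomial case):
every multivariate power series over the Laurent polynomial ring `ℤ[t,t⁻¹]` with constant
coefficient `1` can be written uniquely as `∏_{λ ≠ 0} ∏_{n ∈ ℤ} (1 - tⁿ X^λ)^{m(λ,n)}`,
interpreted coefficientwise: the coefficient at `d` equals the coefficient at `d` of the
finite product over nonzero `λ ≤ d` and `n` in the support of the finitely supported
function `m λ : ℤ →₀ ℤ`. (The family `m` is normalized by `m 0 = 0`; `tⁿ` is the Laurent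
monomial `LaurentPolynomial.T n`.) -/
theorem stmt_3 (σ : Type*) [Fintype σ]
    (f : MvPowerSeries σ (LaurentPolynomial ℤ))
    (hf : MvPowerSeries.constantCoeff (σ := σ) (R := LaurentPolynomial ℤ) f = 1) :
    ∃! m : (σ →₀ ℕ) → (ℤ →₀ ℤ),
      m 0 = 0 ∧
      ∀ d : σ →₀ ℕ, MvPowerSeries.coeff (R := LaurentPolynomial ℤ) d f =
        MvPowerSeries.coeff (R := LaurentPolynomial ℤ) d
          (∏ lam ∈ (Finset.Iic d).erase 0, ∏ n ∈ (m lam).support,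
            zpowSeries
              (1 - MvPowerSeries.monomial (R := LaurentPolynomial ℤ) lam (LaurentPolynomial.T n))
              (m lam n)) :=
  stmt_3_general σ f hf
end

section
/- Let σ be a finite type, S an additive submonoid of ℕ^σ, and let f ∈ MvPowerSeries σ ℤ[t] have constant coefficient 1 and be supported on S (the coefficient of f at every exponent vector d ∉ S is 0). Let m be the product-form exponent family of f, i.e. the unique family with f = ∏_{λ ≠ 0} ∏_{n ≥ 0} (1 − tⁿX^λ)^{m(λ,n)}. Then m(λ,n) = 0 for every λ ∉ S and every n. -/
/-!
Induct on `λ`. Power series supported on an additive submonoid of exponents form a subring,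
closed under inverting series with constant coefficient `1`. If `m(μ, ·) = 0` for all `μ < λ`
outside `S`, then every factor of the product except the `λ`-factor is supported on `S`, and the
`λ`-factor is supported on `ℕλ`, whose only elements below `λ` are `0` and `λ`. Hence the
`X^λ`-coefficient of `f`, which vanishes as `λ ∉ S`, equals that of the `λ`-factor, namely
`-∑ₙ m(λ, n) tⁿ`; so `m(λ, ·) = 0`.
-/

open Finset

theorem AddSubmonoid.eq_zero_or_eq_of_mem_closure_singleton_of_le {M : Type*}
    [AddCommMonoid M] [PartialOrder M] [CanonicallyOrderedAdd M] [IsOrderedCancelAddMonoid M]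
    {l d : M} (hd : d ∈ AddSubmonoid.closure {l}) (hle : d ≤ l) : d = 0 ∨ d = l := by
  obtain ⟨j, rfl⟩ := AddSubmonoid.mem_closure_singleton.1 hd
  cases j with
  | zero => exact Or.inl (zero_nsmul l)
  | succ j =>
    rw [succ_nsmul, add_le_iff_nonpos_left, nonpos_iff_eq_zero] at hle
    rw [succ_nsmul, hle, zero_add]
    exact Or.inr rfl

namespace MvPowerSeries

variable {σ R : Type*} [CommRing R]

def supportedIn (M : AddSubmonoid (σ →₀ ℕ)) : Subring (MvPowerSeries σ R) where
  carrier := {g | ∀ d ∉ M, coeff d g = 0}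
  mul_mem' {a b} ha hb d hd := by
    classical
    rw [coeff_mul]
    refine sum_eq_zero fun p hp => ?_
    rw [HasAntidiagonal.mem_antidiagonal] at hp
    by_cases h₁ : p.1 ∈ M
    · rw [hb p.2 fun h₂ => hd (hp ▸ M.add_mem h₁ h₂), mul_zero]
    · rw [ha p.1 h₁, zero_mul]
  one_mem' d hd := by
    classical
    rw [coeff_one, if_neg (by rintro rfl; exact hd M.zero_mem)]
  add_mem' ha hb d hd := by rw [map_add, ha d hd, hb d hd, add_zero]
  zero_mem' d _ := map_zero _
  neg_mem' ha d hd := by rw [map_neg, ha d hd, neg_zero]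

theorem supportedIn_mono {M M' : AddSubmonoid (σ →₀ ℕ)} (h : M ≤ M') :
    supportedIn (R := R) M ≤ supportedIn M' :=
  fun _ hg d hd => hg d fun hdM => hd (h hdM)

theorem invOfUnit_mem_supportedIn {M : AddSubmonoid (σ →₀ ℕ)} {g : MvPowerSeries σ R}
    (hg : g ∈ supportedIn M) (u : Rˣ) : invOfUnit g u ∈ supportedIn M := by
  classical
  intro d
  induction d using WellFoundedLT.induction with
  | _ d ih =>
    intro hd
    rw [coeff_invOfUnit, if_neg (by rintro rfl; exact hd M.zero_mem)]
    refine mul_eq_zero_of_right _ (sum_eq_zero fun p hp => ?_)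
    rw [HasAntidiagonal.mem_antidiagonal] at hp
    split_ifs with hlt
    · by_cases h₁ : p.1 ∈ M
      · rw [ih p.2 hlt fun h₂ => hd (hp ▸ M.add_mem h₁ h₂), mul_zero]
      · rw [hg p.1 h₁, zero_mul]
    · rfl

theorem zpowSeries_mem_supportedIn {M : AddSubmonoid (σ →₀ ℕ)} {g : MvPowerSeries σ R}
    (hg : g ∈ supportedIn M) (z : ℤ) : zpowSeries g z ∈ supportedIn M := by
  unfold zpowSeries
  split_ifs
  · exact pow_mem hg _
  · exact pow_mem (invOfUnit_mem_supportedIn hg 1) _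

theorem constantCoeff_zpowSeries {g : MvPowerSeries σ R} (hg : constantCoeff g = 1) (z : ℤ) :
    constantCoeff (zpowSeries g z) = 1 := by
  unfold zpowSeries
  split_ifs
  · rw [map_pow, hg, one_pow]
  · rw [map_pow, constantCoeff_invOfUnit, inv_one, Units.val_one, one_pow]

theorem coeff_mul_of_mem_supportedIn_closure {l : σ →₀ ℕ} (hl : l ≠ 0) {a : MvPowerSeries σ R}
    (ha : a ∈ supportedIn (AddSubmonoid.closure {l})) (b : MvPowerSeries σ R) :
    coeff l (a * b) = coeff 0 a * coeff l b + coeff l a * coeff 0 b := by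
  classical
  rw [coeff_mul, sum_eq_add_of_mem (0, l) (l, 0) (by simp) (by simp) (by simp [hl.symm])]
  rintro ⟨d, e⟩ hp ⟨h0, hl'⟩
  rw [HasAntidiagonal.mem_antidiagonal] at hp
  by_cases hd : d ∈ AddSubmonoid.closure {l}
  · rcases AddSubmonoid.eq_zero_or_eq_of_mem_closure_singleton_of_le hd (hp ▸ le_self_add)
      with rfl | rfl
    · exact absurd (by simpa using hp) h0
    · exact absurd (by simpa using hp) hl'
  · rw [ha d hd, zero_mul]

section CoeffAtGenerator

variable {l : σ →₀ ℕ} {g : MvPowerSeries σ R}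

theorem coeff_pow_of_mem_supportedIn_closure (hl : l ≠ 0) (hg₀ : constantCoeff g = 1)
    (hg : g ∈ supportedIn (AddSubmonoid.closure {l})) (k : ℕ) :
    coeff l (g ^ k) = k • coeff l g := by
  induction k with
  | zero => classical simp [coeff_one, hl]
  | succ k ih =>
    rw [pow_succ', coeff_mul_of_mem_supportedIn_closure hl hg, ih,
      coeff_zero_eq_constantCoeff_apply, coeff_zero_eq_constantCoeff_apply, map_pow, hg₀,
      one_pow, succ_nsmul]
    ring

theorem coeff_invOfUnit_of_mem_supportedIn_closure (hl : l ≠ 0) (hg₀ : constantCoeff g = 1)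
    (hg : g ∈ supportedIn (AddSubmonoid.closure {l})) :
    coeff l (invOfUnit g 1) = -coeff l g := by
  classical
  have h := congrArg (coeff l) (mul_invOfUnit g 1 (by rw [hg₀, Units.val_one]))
  rw [coeff_mul_of_mem_supportedIn_closure hl hg, coeff_zero_eq_constantCoeff_apply,
    coeff_zero_eq_constantCoeff_apply, hg₀, constantCoeff_invOfUnit, coeff_one, if_neg hl]
    at h
  simp only [inv_one, Units.val_one, one_mul, mul_one] at h
  linear_combination h

theorem coeff_zpowSeries_of_mem_supportedIn_closure (hl : l ≠ 0) (hg₀ : constantCoeff g = 1)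
    (hg : g ∈ supportedIn (AddSubmonoid.closure {l})) (z : ℤ) :
    coeff l (zpowSeries g z) = z • coeff l g := by
  unfold zpowSeries
  split_ifs with hz
  · rw [coeff_pow_of_mem_supportedIn_closure hl hg₀ hg, ← natCast_zsmul, Int.toNat_of_nonneg hz]
  · have hinv₀ : constantCoeff (invOfUnit g 1) = 1 := by
      rw [constantCoeff_invOfUnit, inv_one, Units.val_one]
    rw [coeff_pow_of_mem_supportedIn_closure hl hinv₀ (invOfUnit_mem_supportedIn hg 1),
      coeff_invOfUnit_of_mem_supportedIn_closure hl hg₀ hg, ← natCast_zsmul,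
      Int.toNat_of_nonneg (by omega), smul_neg, ← neg_smul, neg_neg]

theorem coeff_prod_of_mem_supportedIn_closure (hl : l ≠ 0) {ι : Type*} (s : Finset ι)
    (u : ι → MvPowerSeries σ R) (hu₀ : ∀ i ∈ s, constantCoeff (u i) = 1)
    (hu : ∀ i ∈ s, u i ∈ supportedIn (AddSubmonoid.closure {l})) :
    coeff l (∏ i ∈ s, u i) = ∑ i ∈ s, coeff l (u i) := by
  classical
  induction s using Finset.induction with
  | empty => simp [coeff_one, hl]
  | insert a s ha ih =>
    have hs₀ : coeff 0 (∏ i ∈ s, u i) = 1 := by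
      rw [coeff_zero_eq_constantCoeff_apply, map_prod]
      exact prod_eq_one fun i hi => hu₀ i (mem_insert_of_mem hi)
    rw [prod_insert ha, sum_insert ha,
      coeff_mul_of_mem_supportedIn_closure hl (hu a (mem_insert_self a s)), hs₀,
      coeff_zero_eq_constantCoeff_apply, hu₀ a (mem_insert_self a s),
      ih (fun i hi => hu₀ i (mem_insert_of_mem hi)) (fun i hi => hu i (mem_insert_of_mem hi)),
      one_mul, mul_one, add_comm]

end CoeffAtGenerator

section ProductForm

/-- The factor `∏ₙ (1 - cₙ X^l)^{eₙ}` of a product formula contributed by the exponent vector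
`l`; in the theorem `cₙ = tⁿ` and `e = m(l, ·)`. -/
noncomputable def productFormFactor (c : ℕ → R) (e : ℕ →₀ ℤ) (l : σ →₀ ℕ) :
    MvPowerSeries σ R :=
  ∏ n ∈ e.support, zpowSeries (1 - monomial l (c n)) (e n)

variable {l : σ →₀ ℕ} (c : ℕ → R) (e : ℕ →₀ ℤ)

theorem constantCoeff_one_sub_monomial (hl : l ≠ 0) (a : R) :
    constantCoeff (1 - monomial l a) = 1 := by
  classical
  rw [map_sub, map_one, ← coeff_zero_eq_constantCoeff_apply, coeff_monomial,
    if_neg (Ne.symm hl), sub_zero]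

theorem one_sub_monomial_mem_supportedIn_closure (a : R) :
    1 - monomial l a ∈ supportedIn (AddSubmonoid.closure {l}) := by
  classical
  refine sub_mem (one_mem _) fun d hd => ?_
  rw [coeff_monomial, if_neg]
  rintro rfl
  exact hd (AddSubmonoid.subset_closure rfl)

theorem constantCoeff_productFormFactor (hl : l ≠ 0) :
    constantCoeff (productFormFactor c e l) = 1 := by
  rw [productFormFactor, map_prod]
  exact prod_eq_one fun _ _ =>
    constantCoeff_zpowSeries (constantCoeff_one_sub_monomial hl _) _

theorem productFormFactor_mem_supportedIn_closure :
    productFormFactor c e l ∈ supportedIn (AddSubmonoid.closure {l}) :=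
  prod_mem fun _ _ => zpowSeries_mem_supportedIn (one_sub_monomial_mem_supportedIn_closure _) _

theorem coeff_productFormFactor (hl : l ≠ 0) :
    coeff l (productFormFactor c e l) = -∑ n ∈ e.support, e n • c n := by
  classical
  rw [productFormFactor, coeff_prod_of_mem_supportedIn_closure hl _ _
      (fun n _ => constantCoeff_zpowSeries (constantCoeff_one_sub_monomial hl _) _)
      (fun n _ => zpowSeries_mem_supportedIn (one_sub_monomial_mem_supportedIn_closure _) _),
    ← sum_neg_distrib]
  refine sum_congr rfl fun n _ => ?_
  rw [coeff_zpowSeries_of_mem_supportedIn_closure hl (constantCoeff_one_sub_monomial hl _)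
      (one_sub_monomial_mem_supportedIn_closure _), map_sub, coeff_one, if_neg hl,
    coeff_monomial, if_pos rfl, zero_sub, smul_neg]

theorem coeff_prod_productFormFactor_of_notMem (S : AddSubmonoid (σ →₀ ℕ))
    (m : (σ →₀ ℕ) → ℕ →₀ ℤ) {lam : σ →₀ ℕ} (hlam : lam ∉ S)
    (hm : ∀ l < lam, l ∉ S → m l = 0) [DecidableEq σ] [DecidableEq (σ →₀ ℕ)] :
    coeff lam (∏ l ∈ (Iic lam).erase 0, productFormFactor c (m l) l) =
      -∑ n ∈ (m lam).support, m lam n • c n := by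
  have hlam₀ : lam ≠ 0 := by rintro rfl; exact hlam S.zero_mem
  have hmem : lam ∈ (Iic lam).erase 0 := mem_erase.2 ⟨hlam₀, mem_Iic.2 le_rfl⟩
  set rest := ∏ l ∈ ((Iic lam).erase 0).erase lam, productFormFactor c (m l) l
  have hrest : rest ∈ supportedIn S := by
    refine prod_mem fun l hl => ?_
    obtain ⟨hl_ne, -, hl_le⟩ : l ≠ lam ∧ l ≠ 0 ∧ l ≤ lam := by simpa using hl
    by_cases hlS : l ∈ S
    · exact supportedIn_mono (AddSubmonoid.closure_le.2 (by simpa using hlS))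
        (productFormFactor_mem_supportedIn_closure c _)
    · simp [productFormFactor, hm l (lt_of_le_of_ne hl_le hl_ne) hlS, one_mem]
  have hrest₀ : coeff 0 rest = 1 := by
    rw [coeff_zero_eq_constantCoeff_apply, map_prod]
    exact prod_eq_one fun l hl =>
      constantCoeff_productFormFactor c _ (mem_erase.1 (mem_erase.1 hl).2).1
  rw [← mul_prod_erase _ _ hmem, coeff_mul_of_mem_supportedIn_closure hlam₀
      (productFormFactor_mem_supportedIn_closure c _), hrest lam hlam, hrest₀, mul_zero, zero_add,
    mul_one, coeff_productFormFactor c _ hlam₀]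

end ProductForm

end MvPowerSeries

theorem Polynomial.eq_zero_of_sum_zsmul_X_pow_eq_zero {e : ℕ →₀ ℤ}
    (h : ∑ n ∈ e.support, e n • (Polynomial.X ^ n : Polynomial ℤ) = 0) : e = 0 := by
  ext n
  simpa [Polynomial.finsetSum_coeff, Polynomial.coeff_X_pow] using
    congrArg (Polynomial.coeff · n) h

open Classical in
theorem stmt_4_general (σ : Type*) (S : AddSubmonoid (σ →₀ ℕ))
    (f : MvPowerSeries σ (Polynomial ℤ))
    (hsupp : ∀ d : σ →₀ ℕ, d ∉ S → MvPowerSeries.coeff (R := Polynomial ℤ) d f = 0)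
    (m : (σ →₀ ℕ) → (ℕ →₀ ℤ))
    (hm : ∀ d : σ →₀ ℕ, MvPowerSeries.coeff (R := Polynomial ℤ) d f =
      MvPowerSeries.coeff (R := Polynomial ℤ) d
        (∏ lam ∈ (Finset.Iic d).erase 0, ∏ n ∈ (m lam).support,
          zpowSeries (1 - MvPowerSeries.monomial (R := Polynomial ℤ) lam (Polynomial.X ^ n))
            (m lam n))) :
    ∀ lam : σ →₀ ℕ, lam ∉ S → m lam = 0 := by
  intro lam
  induction lam using WellFoundedLT.induction with
  | _ lam ih =>
    intro hlam
    have h := hm lam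
    rw [hsupp lam hlam] at h
    change _ = MvPowerSeries.coeff (R := Polynomial ℤ) lam
      (∏ l ∈ (Finset.Iic lam).erase 0,
        MvPowerSeries.productFormFactor (Polynomial.X ^ ·) (m l) l) at h
    rw [MvPowerSeries.coeff_prod_productFormFactor_of_notMem _ S m hlam ih, zero_eq_neg] at h
    exact Polynomial.eq_zero_of_sum_zsmul_X_pow_eq_zero h

open Classical in
/-- If `f ∈ MvPowerSeries σ ℤ[t]` has constant coefficient `1` and is supported on an
additive submonoid `S` of exponent vectors, then its product-form exponent family `m`
(the unique family with `f = ∏_{λ ≠ 0} ∏_{n ≥ 0} (1 - tⁿX^λ)^{m(λ,n)}` coefficientwise)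
vanishes outside `S`: `m λ = 0` for every `λ ∉ S`. -/
theorem stmt_4 (σ : Type*) [Fintype σ] (S : AddSubmonoid (σ →₀ ℕ))
    (f : MvPowerSeries σ (Polynomial ℤ))
    (hf : MvPowerSeries.constantCoeff (σ := σ) (R := Polynomial ℤ) f = 1)
    (hsupp : ∀ d : σ →₀ ℕ, d ∉ S → MvPowerSeries.coeff (R := Polynomial ℤ) d f = 0)
    (m : (σ →₀ ℕ) → (ℕ →₀ ℤ)) (hm0 : m 0 = 0)
    (hm : ∀ d : σ →₀ ℕ, MvPowerSeries.coeff (R := Polynomial ℤ) d f =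
      MvPowerSeries.coeff (R := Polynomial ℤ) d
        (∏ lam ∈ (Finset.Iic d).erase 0, ∏ n ∈ (m lam).support,
          zpowSeries (1 - MvPowerSeries.monomial (R := Polynomial ℤ) lam (Polynomial.X ^ n))
            (m lam n))) :
    ∀ lam : σ →₀ ℕ, lam ∉ S → m lam = 0 :=
  stmt_4_general σ S f hsupp m hm
end

section
/- Let σ be a finite type, S an additive submonoid of ℕ^σ, and let f ∈ MvPowerSeries σ ℤ[t] have constant coefficient 1. Then there exists a unique function m assigning to each nonzero λ ∈ S a finitely supported function m(λ,·) : ℕ → ℤ such that the power series h defined coefficientwise by: (coefficient of X^d in h) = (coefficient of X^d in f · ∏_{λ ∈ S, 0 ≠ λ ≤ d} ∏_{n ∈ supp m(λ,·)} (1 − tⁿX^λ)^{m(λ,n)}) satisfies: the coefficient of h at 0 is 1 and the coefficient of h at every nonzero d ∈ S is 0. (Negative integer powers are interpreted via inverses in the power series ring.) -/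
theorem WellFoundedLT.existsUnique_forall_eq {α β : Type*} [LT α] [WellFoundedLT α] [Nonempty β]
    (F : (α → β) → α → β) (hF : ∀ g g' x, (∀ y < x, g y = g' y) → F g x = F g' x) :
    ∃! g : α → β, ∀ x, g x = F g x := by
  classical
  refine ⟨WellFoundedLT.fix fun x rec =>
    F (fun y => if h : y < x then rec y h else Classical.arbitrary β) x,
    fun x => ?_, fun g' hg' => funext fun x => ?_⟩
  · rw [WellFoundedLT.fix_eq]
    exact hF _ _ x fun y hy => dif_pos hy
  · induction x using WellFoundedLT.induction with
    | _ x ih =>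
      rw [hg', WellFoundedLT.fix_eq]
      exact hF _ _ x fun y hy => by rw [dif_pos hy, ih y hy]

theorem AddSubmonoid.eq_zero_or_eq_of_mem_multiples_of_le {M : Type*} [AddCommMonoid M]
    [PartialOrder M] [CanonicallyOrderedAdd M] {d b : M} (hb : b ∈ AddSubmonoid.multiples d)
    (hbd : b ≤ d) : b = 0 ∨ b = d := by
  obtain ⟨_ | k, rfl⟩ := hb
  · exact Or.inl (zero_nsmul d)
  · refine Or.inr (le_antisymm hbd ?_)
    simpa only [succ_nsmul] using le_add_self

open Finset

namespace MvPowerSeries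

variable {σ R : Type*} [CommRing R]

def principalUnitsOn (T : AddSubmonoid (σ →₀ ℕ)) : Submonoid (MvPowerSeries σ R) where
  carrier := {F | constantCoeff F = 1 ∧ ∀ e ∉ T, coeff e F = 0}
  one_mem' := by
    classical
    refine ⟨map_one _, fun e he => ?_⟩
    rw [coeff_one, if_neg (by rintro rfl; exact he T.zero_mem)]
  mul_mem' := by
    classical
    rintro F G ⟨hF1, hF⟩ ⟨hG1, hG⟩
    refine ⟨by rw [map_mul, hF1, hG1, one_mul], fun e he => ?_⟩
    rw [coeff_mul]
    refine sum_eq_zero fun ⟨a, b⟩ hab => ?_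
    rw [HasAntidiagonal.mem_antidiagonal] at hab
    by_cases ha : a ∈ T
    · rw [hG b fun hb => he (hab ▸ T.add_mem ha hb), mul_zero]
    · rw [hF a ha, zero_mul]

variable {T : AddSubmonoid (σ →₀ ℕ)} {F : MvPowerSeries σ R}

theorem invOfUnit_one_mem_principalUnitsOn (hF : F ∈ principalUnitsOn T) :
    invOfUnit F 1 ∈ principalUnitsOn T := by
  classical
  refine ⟨by simp [constantCoeff_invOfUnit], fun e => ?_⟩
  induction e using WellFoundedLT.induction with
  | _ e ih =>
    intro he
    rw [coeff_invOfUnit, if_neg (by rintro rfl; exact he T.zero_mem), sum_eq_zero, mul_zero]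
    rintro ⟨a, b⟩ hab
    rw [HasAntidiagonal.mem_antidiagonal] at hab
    split_ifs with hb
    · by_cases ha : a ∈ T
      · rw [ih b hb fun hbT => he (hab ▸ T.add_mem ha hbT), mul_zero]
      · rw [hF.2 a ha, zero_mul]
    · rfl

theorem zpowSeries_mem_principalUnitsOn (hF : F ∈ principalUnitsOn T) (k : ℤ) :
    zpowSeries F k ∈ principalUnitsOn T := by
  unfold zpowSeries
  split_ifs
  · exact pow_mem hF _
  · exact pow_mem (invOfUnit_one_mem_principalUnitsOn hF) _

theorem one_sub_monomial_mem_principalUnitsOn {lam : σ →₀ ℕ} (hlam : lam ≠ 0) (c : R) :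
    1 - monomial lam c ∈ principalUnitsOn (AddSubmonoid.multiples lam) := by
  classical
  refine ⟨?_, fun e he => ?_⟩
  · rw [map_sub, map_one, ← coeff_zero_eq_constantCoeff_apply, coeff_monomial,
      if_neg (Ne.symm hlam), sub_zero]
  rw [map_sub, coeff_one, coeff_monomial, if_neg, if_neg, sub_zero]
  · rintro rfl; exact he (AddSubmonoid.mem_multiples _)
  · rintro rfl; exact he (AddSubmonoid.zero_mem _)

section CoeffAtGenerator

variable {d : σ →₀ ℕ}

/-- Only the splittings `d = d + 0` and `d = 0 + d` contribute, since the multiples of `d`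
below `d` are `0` and `d`. -/
theorem coeff_mul_of_mem_principalUnitsOn_multiples (hd : d ≠ 0) (g : MvPowerSeries σ R)
    (hF : F ∈ principalUnitsOn (AddSubmonoid.multiples d)) :
    coeff d (g * F) = coeff d g + constantCoeff g * coeff d F := by
  classical
  have hsub : {(d, 0), (0, d)} ⊆ antidiagonal d := by simp [insert_subset_iff]
  rw [coeff_mul, ← sum_subset hsub, sum_pair (by simp [hd]), coeff_zero_eq_constantCoeff_apply,
    hF.1, mul_one, coeff_zero_eq_constantCoeff_apply]
  rintro ⟨a, b⟩ hab hne
  rw [HasAntidiagonal.mem_antidiagonal] at hab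
  by_cases hb : b ∈ AddSubmonoid.multiples d
  · obtain rfl | rfl := AddSubmonoid.eq_zero_or_eq_of_mem_multiples_of_le hb (hab ▸ le_add_self)
      <;> simp_all
  · rw [hF.2 b hb, mul_zero]

theorem coeff_prod_of_mem_principalUnitsOn_multiples {ι : Type*} (hd : d ≠ 0) (s : Finset ι)
    (G : ι → MvPowerSeries σ R) (hG : ∀ i ∈ s, G i ∈ principalUnitsOn (AddSubmonoid.multiples d)) :
    coeff d (∏ i ∈ s, G i) = ∑ i ∈ s, coeff d (G i) := by
  classical
  induction s using Finset.induction_on with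
  | empty => simp [coeff_one, hd]
  | insert a s ha ih =>
    have hs := fun i hi => hG i (mem_insert_of_mem hi)
    rw [prod_insert ha, sum_insert ha, mul_comm,
      coeff_mul_of_mem_principalUnitsOn_multiples hd _ (hG a (mem_insert_self a s)), ih hs,
      (prod_mem hs : _ ∈ principalUnitsOn _).1, one_mul, add_comm]

theorem coeff_pow_of_mem_principalUnitsOn_multiples (hd : d ≠ 0)
    (hF : F ∈ principalUnitsOn (AddSubmonoid.multiples d)) (j : ℕ) :
    coeff d (F ^ j) = j • coeff d F := by
  rw [← card_range j, ← prod_const,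
    coeff_prod_of_mem_principalUnitsOn_multiples hd _ _ fun _ _ => hF, sum_const]

theorem coeff_invOfUnit_one_of_mem_principalUnitsOn_multiples (hd : d ≠ 0)
    (hF : F ∈ principalUnitsOn (AddSubmonoid.multiples d)) :
    coeff d (invOfUnit F 1) = -coeff d F := by
  classical
  have h := congrArg (coeff d) (invOfUnit_mul F 1 (by rw [hF.1, Units.val_one]))
  rw [coeff_mul_of_mem_principalUnitsOn_multiples hd _ hF, coeff_one, if_neg hd,
    constantCoeff_invOfUnit, inv_one, Units.val_one, one_mul] at h
  exact eq_neg_of_add_eq_zero_left h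

theorem coeff_zpowSeries_of_mem_principalUnitsOn_multiples (hd : d ≠ 0)
    (hF : F ∈ principalUnitsOn (AddSubmonoid.multiples d)) (k : ℤ) :
    coeff d (zpowSeries F k) = k • coeff d F := by
  unfold zpowSeries
  split_ifs with hk
  · rw [coeff_pow_of_mem_principalUnitsOn_multiples hd hF, ← natCast_zsmul,
      Int.toNat_of_nonneg hk]
  · rw [coeff_pow_of_mem_principalUnitsOn_multiples hd (invOfUnit_one_mem_principalUnitsOn hF),
      coeff_invOfUnit_one_of_mem_principalUnitsOn_multiples hd hF, ← natCast_zsmul,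
      Int.toNat_of_nonneg (by omega), neg_smul_neg]

end CoeffAtGenerator

end MvPowerSeries

theorem Polynomial.sum_support_smul_X_pow_eq_iff (k : ℕ →₀ ℤ) (p : Polynomial ℤ) :
    ∑ n ∈ k.support, k n • (X : Polynomial ℤ) ^ n = p ↔ k = p.toFinsupp.coeff := by
  have hcoeff (i : ℕ) : (∑ n ∈ k.support, k n • (X : Polynomial ℤ) ^ n).coeff i = k i := by
    simp [finsetSum_coeff, coeff_X_pow, eq_comm]
  simp only [Polynomial.ext_iff, Finsupp.ext_iff, hcoeff]
  exact forall_congr' fun i => Iff.rfl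

open MvPowerSeries

section Peterson

variable {σ : Type*}

noncomputable def petersonFactor (lam : σ →₀ ℕ) (k : ℕ →₀ ℤ) : MvPowerSeries σ (Polynomial ℤ) :=
  ∏ n ∈ k.support, zpowSeries (1 - monomial lam (Polynomial.X ^ n)) (k n)

theorem petersonFactor_mem_principalUnitsOn {lam : σ →₀ ℕ} (hlam : lam ≠ 0) (k : ℕ →₀ ℤ) :
    petersonFactor lam k ∈ principalUnitsOn (AddSubmonoid.multiples lam) :=
  prod_mem fun _ _ =>
    zpowSeries_mem_principalUnitsOn (one_sub_monomial_mem_principalUnitsOn hlam _) _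

theorem coeff_self_petersonFactor {d : σ →₀ ℕ} (hd : d ≠ 0) (k : ℕ →₀ ℤ) :
    coeff d (petersonFactor d k) = -∑ n ∈ k.support, k n • Polynomial.X ^ n := by
  classical
  rw [petersonFactor, coeff_prod_of_mem_principalUnitsOn_multiples hd _ _ fun _ _ =>
    zpowSeries_mem_principalUnitsOn (one_sub_monomial_mem_principalUnitsOn hd _) _,
    ← sum_neg_distrib]
  refine sum_congr rfl fun n _ => ?_
  rw [coeff_zpowSeries_of_mem_principalUnitsOn_multiples hd
    (one_sub_monomial_mem_principalUnitsOn hd _), map_sub, coeff_one, if_neg hd,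
    coeff_monomial_same, zero_sub, smul_neg]

open scoped Classical in
theorem coeff_mul_prod_petersonFactor_Iic {g : MvPowerSeries σ (Polynomial ℤ)}
    (hg : constantCoeff g = 1) (m : (σ →₀ ℕ) → ℕ →₀ ℤ) {d : σ →₀ ℕ} (hd : d ≠ 0) :
    coeff d (g * ∏ lam ∈ (Iic d).erase 0, petersonFactor lam (m lam)) =
      coeff d (g * ∏ lam ∈ (Iio d).erase 0, petersonFactor lam (m lam)) -
        ∑ n ∈ (m d).support, m d n • Polynomial.X ^ n := by
  have hIic : (Iic d).erase 0 = insert d ((Iio d).erase 0) := by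
    rw [← Iic_erase, erase_right_comm, insert_erase (mem_erase.2 ⟨hd, mem_Iic.2 le_rfl⟩)]
  have hconst :
      constantCoeff (g * ∏ lam ∈ (Iio d).erase 0, petersonFactor lam (m lam)) = 1 := by
    rw [map_mul, hg, one_mul, map_prod]
    exact prod_eq_one fun lam hlam =>
      (petersonFactor_mem_principalUnitsOn (ne_of_mem_erase hlam) _).1
  rw [hIic, prod_insert (by simp), mul_left_comm, mul_comm (petersonFactor d _),
    coeff_mul_of_mem_principalUnitsOn_multiples hd _ (petersonFactor_mem_principalUnitsOn hd _),
    hconst, one_mul, coeff_self_petersonFactor hd, sub_eq_add_neg]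

open scoped Classical in
def IsPetersonFamily (S : AddSubmonoid (σ →₀ ℕ)) (f : MvPowerSeries σ (Polynomial ℤ))
    (m : (σ →₀ ℕ) → ℕ →₀ ℤ) : Prop :=
  m 0 = 0 ∧ (∀ lam, lam ∉ S → m lam = 0) ∧
    coeff 0 (f * ∏ lam ∈ (Iic (0 : σ →₀ ℕ)).erase 0, petersonFactor lam (m lam)) = 1 ∧
    ∀ d, d ∈ S → d ≠ 0 → coeff d (f * ∏ lam ∈ (Iic d).erase 0, petersonFactor lam (m lam)) = 0

open scoped Classical in
/-- The value of `m d` forced by the condition at `d`, given the values of `m` below `d`. -/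
noncomputable def petersonStep (S : AddSubmonoid (σ →₀ ℕ)) (f : MvPowerSeries σ (Polynomial ℤ))
    (m : (σ →₀ ℕ) → ℕ →₀ ℤ) (d : σ →₀ ℕ) : ℕ →₀ ℤ :=
  if d ∈ S ∧ d ≠ 0 then
    (coeff d (f * ∏ lam ∈ (Iio d).erase 0, petersonFactor lam (m lam))).toFinsupp.coeff
  else 0

open scoped Classical in
theorem petersonStep_congr (S : AddSubmonoid (σ →₀ ℕ)) (f : MvPowerSeries σ (Polynomial ℤ))
    (m m' : (σ →₀ ℕ) → ℕ →₀ ℤ) (d : σ →₀ ℕ) (h : ∀ lam < d, m lam = m' lam) :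
    petersonStep S f m d = petersonStep S f m' d := by
  unfold petersonStep
  rw [prod_congr rfl fun lam hlam =>
    congrArg (petersonFactor lam) (h lam (mem_Iio.1 (mem_of_mem_erase hlam)))]

theorem isPetersonFamily_iff {S : AddSubmonoid (σ →₀ ℕ)} {f : MvPowerSeries σ (Polynomial ℤ)}
    (hf : constantCoeff f = 1) (m : (σ →₀ ℕ) → ℕ →₀ ℤ) :
    IsPetersonFamily S f m ↔ ∀ d, m d = petersonStep S f m d := by
  classical
  have hcoeff : ∀ d ∈ S, d ≠ 0 →
      (coeff d (f * ∏ lam ∈ (Iic d).erase 0, petersonFactor lam (m lam)) = 0 ↔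
        m d = petersonStep S f m d) := fun d hS hd => by
    rw [coeff_mul_prod_petersonFactor_Iic hf m hd, sub_eq_zero, eq_comm, petersonStep,
      if_pos ⟨hS, hd⟩, Polynomial.sum_support_smul_X_pow_eq_iff]
  constructor
  · rintro ⟨h0, hS, -, hcond⟩ d
    by_cases h : d ∈ S ∧ d ≠ 0
    · exact (hcoeff d h.1 h.2).1 (hcond d h.1 h.2)
    · rw [petersonStep, if_neg h]
      rcases not_and_or.1 h with h | h
      exacts [hS d h, not_not.1 h ▸ h0]
  · intro h
    refine ⟨?_, fun lam hlam => ?_, ?_, fun d hS hd => (hcoeff d hS hd).2 (h d)⟩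
    · rw [h, petersonStep, if_neg (by simp)]
    · rw [h, petersonStep, if_neg (by tauto)]
    · simp [hf, bot_eq_zero]

end Peterson

open Classical in
theorem stmt_5_general (σ : Type*) (S : AddSubmonoid (σ →₀ ℕ))
    (f : MvPowerSeries σ (Polynomial ℤ))
    (hf : MvPowerSeries.constantCoeff f = 1) :
    ∃! m : (σ →₀ ℕ) → (ℕ →₀ ℤ),
      m 0 = 0 ∧
      (∀ lam : σ →₀ ℕ, lam ∉ S → m lam = 0) ∧
      MvPowerSeries.coeff 0
        (f * ∏ lam ∈ (Finset.Iic (0 : σ →₀ ℕ)).erase 0, ∏ n ∈ (m lam).support,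
          zpowSeries (1 - MvPowerSeries.monomial lam (Polynomial.X ^ n))
            (m lam n)) = 1 ∧
      (∀ d : σ →₀ ℕ, d ∈ S → d ≠ 0 →
        MvPowerSeries.coeff d
          (f * ∏ lam ∈ (Finset.Iic d).erase 0, ∏ n ∈ (m lam).support,
            zpowSeries (1 - MvPowerSeries.monomial lam (Polynomial.X ^ n))
              (m lam n)) = 0) := by
  have hfix := WellFoundedLT.existsUnique_forall_eq (petersonStep S f) (petersonStep_congr S f)
  exact (existsUnique_congr (isPetersonFamily_iff hf)).2 hfix

open Classical in
/-- **Correctness of the generalized Peterson algorithm** (§5): for `f ∈ MvPowerSeries σ ℤ[t]`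
with constant coefficient `1` and an additive submonoid `S` of exponent vectors, there is a
unique family `m` assigning to each nonzero `λ ∈ S` a finitely supported `m λ : ℕ →₀ ℤ`
(normalized to vanish at `λ = 0` and outside `S`) such that the series `h` defined
coefficientwise by `coeff d h = coeff d (f · ∏_{0 ≠ λ ≤ d} ∏_{n} (1 - tⁿX^λ)^{m(λ,n)})`
satisfies `coeff 0 h = 1` and `coeff d h = 0` for all nonzero `d ∈ S`.
(Since `m` vanishes off `S`, the product is effectively over `λ ∈ S`, `0 ≠ λ ≤ d`.) -/
theorem stmt_5 (σ : Type*) [Fintype σ] (S : AddSubmonoid (σ →₀ ℕ))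
    (f : MvPowerSeries σ (Polynomial ℤ))
    (hf : MvPowerSeries.constantCoeff f = 1) :
    ∃! m : (σ →₀ ℕ) → (ℕ →₀ ℤ),
      m 0 = 0 ∧
      (∀ lam : σ →₀ ℕ, lam ∉ S → m lam = 0) ∧
      MvPowerSeries.coeff 0
        (f * ∏ lam ∈ (Finset.Iic (0 : σ →₀ ℕ)).erase 0, ∏ n ∈ (m lam).support,
          zpowSeries (1 - MvPowerSeries.monomial lam (Polynomial.X ^ n))
            (m lam n)) = 1 ∧
      (∀ d : σ →₀ ℕ, d ∈ S → d ≠ 0 →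
        MvPowerSeries.coeff d
          (f * ∏ lam ∈ (Finset.Iic d).erase 0, ∏ n ∈ (m lam).support,
            zpowSeries (1 - MvPowerSeries.monomial lam (Polynomial.X ^ n))
              (m lam n)) = 0) :=
  stmt_5_general σ S f hf
end

section
/- Let σ be a finite type, R a commutative ring, and let f ∈ MvPowerSeries σ R have constant coefficient 1. Define the operator D on MvPowerSeries σ R by: the coefficient of X^d in D(f) equals ht(d) · (coefficient of X^d in f), where ht(d) = ∑_{i∈σ} d(i). Then D(f) = f · g, where g is the power series whose constant coefficient is 0 and whose coefficient at each nonzero exponent vector d equals the sum, over all nonempty finite lists (λ₁, …, λ_r) of nonzero exponent vectors with λ₁ + ⋯ + λ_r = d, of (−1)^{r−1} · ht(λ₁) · ∏_{i=1}^r (coefficient of X^{λᵢ} in f). -/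
/-!
Since `constantCoeff f = 1`, `f` is invertible with `f⁻¹ = ∑ᵣ (1 - f)ʳ`, whose coefficient at `d`
is the signed sum `∑ (-1)ʳ ∏ᵢ f_{λᵢ}` over the lists `(λ₁, …, λ_r)` of nonzero vectors with sum
`d`. Take `g = D f · f⁻¹`, so that `f g = D f`. Both the identity `f f⁻¹ = 1` and the coefficient
formula for `g` come from splitting off the first part `λ₁` of each list, which turns a sum over
lists with sum `d` into a sum over `λ₁ + d' = d` of sums over lists with sum `d'`.
-/

/-- The height of an exponent vector: its total degree `∑ᵢ d i`. -/
def htv {σ : Type*} (d : σ →₀ ℕ) : ℕ := d.sum fun _ n => n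

open MvPowerSeries Finset

lemma htv_eq_degree {σ : Type*} (d : σ →₀ ℕ) : htv d = d.degree := rfl

section Compositions

variable {σ : Type*}

lemma length_le_degree_sum {l : List (σ →₀ ℕ)} (hl : ∀ x ∈ l, x ≠ 0) :
    l.length ≤ l.sum.degree := by
  rw [map_list_sum, ← List.length_map (f := Finsupp.degree)]
  refine List.length_le_sum_of_one_le _ fun n hn => ?_
  obtain ⟨x, hx, rfl⟩ := List.mem_map.1 hn
  exact Nat.one_le_iff_ne_zero.2 fun h => hl x hx ((Finsupp.degree_eq_zero_iff x).1 h)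

lemma finite_setOf_compositions (d : σ →₀ ℕ) :
    {l : List (σ →₀ ℕ) | (∀ x ∈ l, x ≠ 0) ∧ l.sum = d}.Finite := by
  classical
  have : Finite (Set.Iic d) := (Set.finite_Iic d).to_subtype
  refine ((List.finite_length_le (Set.Iic d) d.degree).image (List.map Subtype.val)).subset ?_
  rintro l ⟨hl, rfl⟩
  have hmem : ∀ x ∈ l, x ∈ Set.Iic l.sum := fun x hx => List.le_sum_of_mem hx
  refine ⟨l.pmap Subtype.mk hmem, ?_, by simp [List.map_pmap]⟩
  simpa using length_le_degree_sum hl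

/-- The ordered partitions of `d`, together with `[]` when `d = 0`. -/
noncomputable def compositions (d : σ →₀ ℕ) : Finset (List (σ →₀ ℕ)) :=
  (finite_setOf_compositions d).toFinset

lemma mem_compositions {d : σ →₀ ℕ} {l : List (σ →₀ ℕ)} :
    l ∈ compositions d ↔ (∀ x ∈ l, x ≠ 0) ∧ l.sum = d := by
  simp [compositions]

lemma compositions_zero : compositions (0 : σ →₀ ℕ) = {[]} := by
  ext l
  rw [mem_compositions, mem_singleton]
  refine ⟨fun ⟨hl, hsum⟩ => ?_, by rintro rfl; simp⟩
  have := length_le_degree_sum hl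
  rw [hsum, map_zero, Nat.le_zero, List.length_eq_zero_iff] at this
  exact this

lemma coe_compositions_of_ne_zero {d : σ →₀ ℕ} (hd : d ≠ 0) :
    (compositions d : Set (List (σ →₀ ℕ))) =
      {l | l ≠ [] ∧ (∀ x ∈ l, x ≠ 0) ∧ l.sum = d} := by
  ext l
  simp only [mem_coe, mem_compositions, Set.mem_ofPred_eq]
  grind

lemma filter_eq_nil_compositions [DecidableEq σ] (d : σ →₀ ℕ) :
    {l ∈ compositions d | l = []} = if d = 0 then {[]} else ∅ := by
  ext l
  rcases l with _ | ⟨x, l⟩ <;> split_ifs with hd <;> simp [mem_compositions, hd, eq_comm]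

lemma sum_compositions_ne_nil [DecidableEq σ] {M : Type*} [AddCommMonoid M]
    (F : List (σ →₀ ℕ) → M) (d : σ →₀ ℕ) :
    ∑ l ∈ compositions d with l ≠ [], F l =
      ∑ p ∈ antidiagonal d with p.1 ≠ 0, ∑ l ∈ compositions p.2, F (p.1 :: l) := by
  rw [sum_sigma']
  refine sum_nbij' (fun l => ⟨(l.headI, l.tail.sum), l.tail⟩)
    (fun x : (_ : (σ →₀ ℕ) × (σ →₀ ℕ)) × List (σ →₀ ℕ) => x.1.1 :: x.2) ?_ ?_ ?_ ?_ ?_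
  · rintro (_ | ⟨x, l⟩) <;> simp +contextual [mem_compositions]
  · rintro ⟨⟨a, b⟩, l⟩
    simp +contextual [mem_compositions]
  · rintro (_ | ⟨x, l⟩) <;> simp
  · rintro ⟨⟨a, b⟩, l⟩
    simp [mem_compositions]
  · rintro (_ | ⟨x, l⟩) <;> simp

lemma sum_compositions [DecidableEq σ] {M : Type*} [AddCommMonoid M]
    (F : List (σ →₀ ℕ) → M) (d : σ →₀ ℕ) :
    ∑ l ∈ compositions d, F l = (if d = 0 then F [] else 0) +
      ∑ p ∈ antidiagonal d with p.1 ≠ 0, ∑ l ∈ compositions p.2, F (p.1 :: l) := by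
  rw [← sum_filter_add_sum_filter_not _ (· = []), filter_eq_nil_compositions,
    sum_compositions_ne_nil]
  split_ifs <;> simp

end Compositions

lemma Finset.HasAntidiagonal.sum_antidiagonal_eq_add_sum_fst_ne_zero {A M : Type*} [AddMonoid A]
    [HasAntidiagonal A] [DecidableEq A] [AddCommMonoid M] (h : A × A → M) (n : A) :
    ∑ p ∈ antidiagonal n, h p = h (0, n) + ∑ p ∈ antidiagonal n with p.1 ≠ 0, h p := by
  rw [← sum_filter_add_sum_filter_not _ (fun p => p.1 = 0)]
  congr 1
  convert sum_singleton h (0, n)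
  ext ⟨a, b⟩
  simp only [mem_filter, mem_antidiagonal, mem_singleton, Prod.mk.injEq]
  grind

section Series

variable {σ R : Type*} [CommRing R]

/-- The operator `D = ∑ᵢ e^{αᵢ} ∂/∂e^{αᵢ}` of the paper. -/
def heightDeriv (f : MvPowerSeries σ R) : MvPowerSeries σ R := fun d => (htv d : R) * coeff d f

lemma coeff_heightDeriv (f : MvPowerSeries σ R) (d : σ →₀ ℕ) :
    coeff d (heightDeriv f) = htv d * coeff d f := rfl

/-- `∑ᵣ (1 - f)ʳ` expanded over compositions; the inverse of `f` when `constantCoeff f = 1`. -/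
noncomputable def compositionInv (f : MvPowerSeries σ R) : MvPowerSeries σ R := fun d =>
  ∑ l ∈ compositions d, (-1) ^ l.length * (l.map fun lam => coeff lam f).prod

lemma coeff_compositionInv (f : MvPowerSeries σ R) (d : σ →₀ ℕ) :
    coeff d (compositionInv f) =
      ∑ l ∈ compositions d, (-1) ^ l.length * (l.map fun lam => coeff lam f).prod := rfl

lemma mul_compositionInv {f : MvPowerSeries σ R} (hf : constantCoeff f = 1) :
    f * compositionInv f = 1 := by
  classical
  ext d
  have hinv : coeff d (compositionInv f) = (if d = 0 then 1 else 0) -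
      ∑ p ∈ antidiagonal d with p.1 ≠ 0, coeff p.1 f * coeff p.2 (compositionInv f) := by
    rw [coeff_compositionInv, sum_compositions, sub_eq_add_neg, ← sum_neg_distrib]
    congr 1
    · split_ifs <;> simp
    · refine sum_congr rfl fun p _ => ?_
      rw [coeff_compositionInv, mul_sum, ← sum_neg_distrib]
      refine sum_congr rfl fun l _ => ?_
      simp only [List.length_cons, List.map_cons, List.prod_cons, pow_succ]
      ring
  rw [coeff_mul, HasAntidiagonal.sum_antidiagonal_eq_add_sum_fst_ne_zero, hinv,
    coeff_zero_eq_constantCoeff_apply, hf, coeff_one]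
  ring

lemma coeff_heightDeriv_mul_compositionInv (f : MvPowerSeries σ R) (d : σ →₀ ℕ) :
    coeff d (heightDeriv f * compositionInv f) = ∑ l ∈ compositions d,
      (-1 : R) ^ (l.length - 1) * (htv l.headI : R) * (l.map fun lam => coeff lam f).prod := by
  classical
  rw [coeff_mul, HasAntidiagonal.sum_antidiagonal_eq_add_sum_fst_ne_zero, sum_compositions]
  congr 1
  · simp [coeff_heightDeriv, htv_eq_degree]
  · refine sum_congr rfl fun p _ => ?_
    rw [coeff_heightDeriv, coeff_compositionInv, mul_sum]
    refine sum_congr rfl fun l _ => ?_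
    simp only [List.length_cons, List.headI, List.map_cons, List.prod_cons, Nat.add_sub_cancel]
    ring

end Series

theorem stmt_7_general (σ : Type*) (R : Type*) [CommRing R]
    (f : MvPowerSeries σ R) (hf : MvPowerSeries.constantCoeff f = 1) :
    ∃ g : MvPowerSeries σ R,
      MvPowerSeries.coeff 0 g = 0 ∧
      (∀ d : σ →₀ ℕ, d ≠ 0 →
        MvPowerSeries.coeff d g =
          ∑ᶠ l ∈ {l : List (σ →₀ ℕ) | l ≠ [] ∧ (∀ x ∈ l, x ≠ 0) ∧ l.sum = d},
            (-1 : R) ^ (l.length - 1) * (htv l.headI : R) *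
              (l.map fun lam => MvPowerSeries.coeff lam f).prod) ∧
      (∀ d : σ →₀ ℕ,
        (htv d : R) * MvPowerSeries.coeff d f = MvPowerSeries.coeff d (f * g)) := by
  refine ⟨heightDeriv f * compositionInv f, ?_, fun d hd => ?_, fun d => ?_⟩
  · simp [coeff_heightDeriv_mul_compositionInv, compositions_zero, htv_eq_degree]
  · rw [coeff_heightDeriv_mul_compositionInv, ← coe_compositions_of_ne_zero hd,
      finsum_mem_coe_finset]
  · rw [mul_left_comm, mul_compositionInv hf, mul_one, coeff_heightDeriv]

/-- **Logarithmic-derivative expansion over ordered partitions** (proof of Theorem 5.1):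
let `f ∈ MvPowerSeries σ R` have constant coefficient `1` and let `D` be the operator with
`coeff d (D f) = ht(d) · coeff d f`.  Then `D f = f * g`, where `g` has constant
coefficient `0` and, at each nonzero `d`, coefficient the (finite) sum over all nonempty
lists `(λ₁, …, λ_r)` of nonzero exponent vectors with sum `d` of
`(-1)^{r-1} · ht(λ₁) · ∏ᵢ (coeff of X^{λᵢ} in f)`. -/
theorem stmt_7 (σ : Type*) [Fintype σ] (R : Type*) [CommRing R]
    (f : MvPowerSeries σ R) (hf : MvPowerSeries.constantCoeff f = 1) :
    ∃ g : MvPowerSeries σ R,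
      MvPowerSeries.coeff 0 g = 0 ∧
      (∀ d : σ →₀ ℕ, d ≠ 0 →
        MvPowerSeries.coeff d g =
          ∑ᶠ l ∈ {l : List (σ →₀ ℕ) | l ≠ [] ∧ (∀ x ∈ l, x ≠ 0) ∧ l.sum = d},
            (-1 : R) ^ (l.length - 1) * (htv l.headI : R) *
              (l.map fun lam => MvPowerSeries.coeff lam f).prod) ∧
      (∀ d : σ →₀ ℕ,
        (htv d : R) * MvPowerSeries.coeff d f = MvPowerSeries.coeff d (f * g)) :=
  stmt_7_general σ R f hf
end

section
/- Let σ be a finite type and let f ∈ MvPowerSeries σ ℤ[t] have constant coefficient 1, with product-form exponent family m, i.e. f = ∏_{λ ≠ 0} ∏_{n ≥ 0} (1 − tⁿX^λ)^{m(λ,n)}. Define the operator D by: the coefficient of X^d in D(f) equals ht(d) · (coefficient of X^d in f), where ht(d) = ∑_{i∈σ} d(i). Then D(f) = f · h, where h is the power series with constant coefficient 0 whose coefficient at each nonzero exponent vector d equals −∑ ht(κ) · (∑_{n≥0} m(κ,n) · t^{kn}), the outer sum being over all pairs (k, κ) of a positive integer k and a nonzero exponent vector κ with d = k·κ. -/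
/-!
`D` is the derivation `X^d ↦ ht(d) X^d`, so `D F / F` is additive over products, and for
a single factor `D(1 - cX^λ) / (1 - cX^λ) = -ht(λ) ∑_{k ≥ 1} c^k X^{kλ}`. To compare
coefficients at `d` we work modulo the ideal of series whose coefficients vanish at every
exponent `≤ d`, which `D` preserves. Modulo it, `f` is the finite product over `0 < λ ≤ d`
(every factor with `λ ≰ d` is `≡ 1`), and each geometric series may be cut off after
`ht(d)` terms; the resulting finite sum has the coefficients of `h` at all exponents `≤ d`.
-/

namespace Derivation

variable {R A : Type*} [CommRing R] [CommRing A] [Algebra R A] (D : Derivation R A A)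

theorem leibniz_units_zpow (u : Aˣ) (k : ℤ) :
    D ↑(u ^ k) = ↑(u ^ k) * (k • (↑u⁻¹ * D u)) := by
  rw [zsmul_eq_mul]
  have hu : (↑u⁻¹ : A) * u = 1 := u.inv_mul
  induction k with
  | zero => simp
  | succ k ih =>
    rw [zpow_add_one, Units.val_mul, leibniz, ih, smul_eq_mul, smul_eq_mul]
    push_cast
    linear_combination (-(↑(u ^ k) * D u)) * hu
  | pred k ih =>
    rw [zpow_sub_one, Units.val_mul, leibniz, ih, smul_eq_mul, smul_eq_mul,
      D.leibniz_of_mul_eq_one u.inv_mul, smul_eq_mul]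
    push_cast
    ring

theorem leibniz_prod_of_eq_mul {ι : Type*} (s : Finset ι) (F W : ι → A)
    (h : ∀ i ∈ s, D (F i) = F i * W i) :
    D (∏ i ∈ s, F i) = (∏ i ∈ s, F i) * ∑ i ∈ s, W i := by
  classical
  induction s using Finset.induction_on with
  | empty => simp
  | insert a s ha ih =>
    rw [Finset.prod_insert ha, Finset.sum_insert ha, leibniz, smul_eq_mul, smul_eq_mul,
      h a (Finset.mem_insert_self a s), ih fun i hi => h i (Finset.mem_insert_of_mem hi)]
    ring

end Derivation

theorem mul_eq_sum_Icc_pow_add {A : Type*} [CommRing A] {v y : A} (hv : v * (1 - y) = 1)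
    (K : ℕ) : v * y = ∑ k ∈ Finset.Icc 1 K, y ^ k + v * y ^ (K + 1) := by
  induction K with
  | zero => simp
  | succ K ih =>
    rw [Finset.sum_Icc_succ_top (by omega), ih]
    linear_combination y ^ (K + 1) * hv

namespace MvPowerSeries

variable {σ R : Type*} [CommRing R]

def vanishingOnIic (a : σ →₀ ℕ) : Ideal (MvPowerSeries σ R) where
  carrier := {F | ∀ c ≤ a, coeff c F = 0}
  add_mem' hF hG c hc := by rw [map_add, hF c hc, hG c hc, add_zero]
  zero_mem' c _ := map_zero _
  smul_mem' G F hF c hc := by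
    classical
    rw [smul_eq_mul, coeff_mul]
    refine Finset.sum_eq_zero fun p hp => ?_
    rw [hF p.2 ((Finset.HasAntidiagonal.antidiagonal.snd_le hp).trans hc), mul_zero]

theorem monomial_mem_vanishingOnIic {a n : σ →₀ ℕ} (h : ¬n ≤ a) (r : R) :
    monomial n r ∈ vanishingOnIic a := by
  classical
  intro c hc
  rw [coeff_monomial, if_neg (by rintro rfl; exact h hc)]

theorem zpowSeries_eq_val_zpow {g : MvPowerSeries σ R} (hg : constantCoeff g = 1) (k : ℤ) :
    zpowSeries g k =
      ↑(Units.mkOfMulEqOne g (invOfUnit g 1) (mul_invOfUnit g 1 (by rw [hg]; rfl)) ^ k) := by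
  rw [zpowSeries]
  split_ifs with hk
  · lift k to ℕ using hk
    rfl
  · obtain ⟨n, rfl⟩ : ∃ n : ℕ, k = -n := ⟨(-k).toNat, by omega⟩
    rw [zpow_neg, zpow_natCast, ← inv_pow, Units.val_pow_eq_pow_val]
    simp only [neg_neg, Int.toNat_natCast]
    rfl

theorem map_zpowSeries_eq_one {S : Type*} [Semiring S] (φ : MvPowerSeries σ R →+* S)
    {g : MvPowerSeries σ R} (hg : constantCoeff g = 1) (hφ : φ g = 1) (k : ℤ) :
    φ (zpowSeries g k) = 1 := by
  have hinv : φ (invOfUnit g 1) = 1 := by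
    simpa only [map_mul, hφ, mul_one, map_one] using
      congrArg φ (invOfUnit_mul g 1 (by rw [hg]; rfl))
  rw [zpowSeries]
  split_ifs <;> rw [map_pow, ‹φ _ = 1›, one_pow]

noncomputable def degreeDerivation : Derivation R (MvPowerSeries σ R) (MvPowerSeries σ R) :=
  Derivation.mk'
    { toFun F := fun d => (d.degree : R) * coeff d F
      map_add' F G := by ext d; exact mul_add _ _ _
      map_smul' r F := by ext d; exact mul_left_comm _ _ _ }
    fun F G => by
      classical
      ext d
      change (d.degree : R) * coeff d (F * G) = coeff d (F * _) + coeff d (G * _)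
      rw [mul_comm G, coeff_mul, coeff_mul, coeff_mul, Finset.mul_sum, ← Finset.sum_add_distrib]
      refine Finset.sum_congr rfl fun p hp => ?_
      change _ = coeff p.1 F * ((p.2.degree : R) * _) + (p.1.degree : R) * _ * _
      rw [← Finset.HasAntidiagonal.mem_antidiagonal.mp hp, map_add, Nat.cast_add]
      ring

theorem coeff_degreeDerivation (d : σ →₀ ℕ) (F : MvPowerSeries σ R) :
    coeff d (degreeDerivation F) = (d.degree : R) * coeff d F := rfl

theorem degreeDerivation_monomial (n : σ →₀ ℕ) (r : R) :
    degreeDerivation (monomial n r) = n.degree • monomial n r := by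
  classical
  ext d
  rw [coeff_degreeDerivation, map_nsmul, coeff_monomial, nsmul_eq_mul]
  split_ifs with h
  · rw [h]
  · rw [mul_zero, mul_zero]

theorem degreeDerivation_one_sub_monomial (n : σ →₀ ℕ) (r : R) :
    degreeDerivation (1 - monomial n r) = -(n.degree • monomial n r) := by
  rw [map_sub, Derivation.map_one_eq_zero, degreeDerivation_monomial, zero_sub]

theorem degreeDerivation_mem_vanishingOnIic {a : σ →₀ ℕ} {F : MvPowerSeries σ R}
    (hF : F ∈ vanishingOnIic a) : degreeDerivation F ∈ vanishingOnIic a := fun c hc => by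
  rw [coeff_degreeDerivation, hF c hc, mul_zero]

theorem constantCoeff_one_sub_monomial_s8 {n : σ →₀ ℕ} (hn : n ≠ 0) (r : R) :
    constantCoeff (1 - monomial n r) = 1 := by
  classical
  rw [← coeff_zero_eq_constantCoeff_apply, map_sub, coeff_one, coeff_monomial, if_pos rfl,
    if_neg hn.symm, sub_zero]

theorem invOfUnit_mul_monomial_sub_sum_mem {a n : σ →₀ ℕ} (hn : n ≠ 0) (r : R) :
    invOfUnit (1 - monomial n r) 1 * monomial n r -
        ∑ k ∈ Finset.Icc 1 a.degree, monomial (k • n) (r ^ k) ∈ vanishingOnIic a := by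
  have hv : invOfUnit (1 - monomial n r) 1 * (1 - monomial n r) = 1 :=
    invOfUnit_mul _ _ (by rw [constantCoeff_one_sub_monomial_s8 hn]; rfl)
  rw [mul_eq_sum_Icc_pow_add hv a.degree]
  simp only [monomial_pow, add_sub_cancel_left]
  refine Ideal.mul_mem_left _ _ (monomial_mem_vanishingOnIic (fun hle => ?_) _)
  have := Finsupp.degree_mono hle
  rw [map_nsmul, smul_eq_mul] at this
  have := Finsupp.degree_eq_zero_iff n
  nlinarith [Nat.pos_of_ne_zero (mt this.mp hn)]

section ProductForm

variable (c : ℕ → R) (m : (σ →₀ ℕ) → ℕ →₀ ℤ)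

noncomputable def productForm (S : Finset (σ →₀ ℕ)) : MvPowerSeries σ R :=
  ∏ lam ∈ S, ∏ n ∈ (m lam).support, zpowSeries (1 - monomial lam (c n)) (m lam n)

theorem productForm_sub_productForm_mem {a : σ →₀ ℕ} {S T : Finset (σ →₀ ℕ)}
    (hST : S ⊆ T) (hT : ∀ lam ∈ T, lam ∉ S → lam ≠ 0 ∧ ¬lam ≤ a) :
    productForm c m T - productForm c m S ∈ vanishingOnIic a := by
  classical
  rw [← Ideal.Quotient.eq, productForm, productForm, ← Finset.prod_sdiff hST, map_mul,
    map_prod, Finset.prod_eq_one, one_mul]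
  intro lam hlam
  obtain ⟨hlam0, hlama⟩ := hT lam (Finset.mem_sdiff.mp hlam).1 (Finset.mem_sdiff.mp hlam).2
  rw [map_prod]
  refine Finset.prod_eq_one fun n _ => map_zpowSeries_eq_one _
    (constantCoeff_one_sub_monomial_s8 hlam0 _) ?_ _
  rw [← map_one (Ideal.Quotient.mk _), Ideal.Quotient.eq, sub_sub_cancel_left]
  exact neg_mem (monomial_mem_vanishingOnIic hlama _)

-- The instance binder lets `hf` match products whose `erase` uses a non-classical
-- `DecidableEq (σ →₀ ℕ)`, such as the one derived from `Fintype σ`.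
theorem sub_productForm_mem_vanishingOnIic [DecidableEq (σ →₀ ℕ)] {f : MvPowerSeries σ R}
    (hf : ∀ d, coeff d f = coeff d (productForm c m ((open Classical in Finset.Iic d).erase 0)))
    (d : σ →₀ ℕ) :
    f - productForm c m ((open Classical in Finset.Iic d).erase 0) ∈ vanishingOnIic d := by
  classical
  intro a ha
  rw [map_sub, hf a, ← map_sub, ← neg_sub, map_neg, neg_eq_zero]
  refine productForm_sub_productForm_mem c m
    (Finset.erase_subset_erase _ (Finset.Iic_subset_Iic.mpr ha)) (fun lam hT hS => ?_) a le_rfl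
  refine ⟨Finset.ne_of_mem_erase hT, fun hle => hS ?_⟩
  exact Finset.mem_erase.mpr ⟨Finset.ne_of_mem_erase hT, Finset.mem_Iic.mpr hle⟩

noncomputable def productFormLogDeriv (S : Finset (σ →₀ ℕ)) : MvPowerSeries σ R :=
  ∑ lam ∈ S, ∑ n ∈ (m lam).support,
    m lam n • -(lam.degree • (invOfUnit (1 - monomial lam (c n)) 1 * monomial lam (c n)))

theorem degreeDerivation_productForm {S : Finset (σ →₀ ℕ)} (hS : ∀ lam ∈ S, lam ≠ 0) :
    degreeDerivation (productForm c m S) = productForm c m S * productFormLogDeriv c m S := by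
  refine Derivation.leibniz_prod_of_eq_mul _ _ _ _ fun lam hlam => ?_
  refine Derivation.leibniz_prod_of_eq_mul _ _ _ _ fun n _ => ?_
  rw [zpowSeries_eq_val_zpow (constantCoeff_one_sub_monomial_s8 (hS lam hlam) (c n)),
    Derivation.leibniz_units_zpow, Units.val_mkOfMulEqOne, degreeDerivation_one_sub_monomial,
    mul_neg, mul_smul_comm lam.degree]
  rfl

noncomputable def logDerivSeries : MvPowerSeries σ R := fun b =>
  -∑ᶠ p ∈ {p : ℕ × (σ →₀ ℕ) | 0 < p.1 ∧ p.2 ≠ 0 ∧ b = p.1 • p.2},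
    (p.2.degree : R) * (m p.2).sum fun n z => z • c n ^ p.1

theorem coeff_logDerivSeries (b : σ →₀ ℕ) :
    coeff b (logDerivSeries c m) =
      -∑ᶠ p ∈ {p : ℕ × (σ →₀ ℕ) | 0 < p.1 ∧ p.2 ≠ 0 ∧ b = p.1 • p.2},
        (p.2.degree : R) * (m p.2).sum fun n z => z • c n ^ p.1 := rfl

noncomputable def logDerivSeriesTrunc (K : ℕ) (S : Finset (σ →₀ ℕ)) : MvPowerSeries σ R :=
  -∑ p ∈ Finset.Icc 1 K ×ˢ S,
    monomial (p.1 • p.2) ((p.2.degree : R) * (m p.2).sum fun n z => z • c n ^ p.1)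

theorem logDerivSeriesTrunc_eq (K : ℕ) (S : Finset (σ →₀ ℕ)) :
    logDerivSeriesTrunc c m K S = ∑ lam ∈ S, ∑ n ∈ (m lam).support,
      m lam n • -(lam.degree • ∑ k ∈ Finset.Icc 1 K, monomial (k • lam) (c n ^ k)) := by
  rw [logDerivSeriesTrunc, Finset.sum_product_right, ← Finset.sum_neg_distrib]
  refine Finset.sum_congr rfl fun lam _ => ?_
  simp only [Finsupp.sum, Finset.mul_sum, map_sum, smul_neg, Finset.smul_sum,
    Finset.sum_neg_distrib]
  rw [Finset.sum_comm]
  refine congrArg Neg.neg (Finset.sum_congr rfl fun k _ => Finset.sum_congr rfl fun n _ => ?_)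
  rw [← map_nsmul, ← map_zsmul, nsmul_eq_mul, mul_smul_comm]

theorem productFormLogDeriv_sub_trunc_mem {d : σ →₀ ℕ} {S : Finset (σ →₀ ℕ)}
    (hS : ∀ lam ∈ S, lam ≠ 0) :
    productFormLogDeriv c m S - logDerivSeriesTrunc c m d.degree S ∈ vanishingOnIic d := by
  rw [productFormLogDeriv, logDerivSeriesTrunc_eq, ← Finset.sum_sub_distrib]
  refine Ideal.sum_mem _ fun lam hlam => ?_
  rw [← Finset.sum_sub_distrib]
  refine Ideal.sum_mem _ fun n _ => ?_
  rw [← smul_sub, ← neg_sub', ← smul_sub]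
  exact zsmul_mem (neg_mem (nsmul_mem (invOfUnit_mul_monomial_sub_sum_mem (hS lam hlam) _) _)) _

theorem coeff_zero_logDerivSeries : coeff 0 (logDerivSeries c m) = 0 := by
  refine neg_eq_zero.mpr (finsum_mem_eq_zero_of_forall_eq_zero fun p ⟨hp1, hp2, hp⟩ => ?_)
  exact absurd ((smul_eq_zero.mp hp.symm).resolve_left hp1.ne') hp2

theorem setOf_eq_nsmul_eq_filter [DecidableEq (σ →₀ ℕ)] {b d : σ →₀ ℕ}
    (hbd : b ≤ d) :
    {p : ℕ × (σ →₀ ℕ) | 0 < p.1 ∧ p.2 ≠ 0 ∧ b = p.1 • p.2} =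
      ↑((Finset.Icc 1 d.degree ×ˢ (open Classical in Finset.Iic d).erase 0).filter
        fun p => b = p.1 • p.2) := by
  classical
  ext ⟨k, lam⟩
  simp only [Set.mem_ofPred_eq, Finset.coe_filter, Finset.mem_product, Finset.mem_Icc,
    Finset.mem_erase, Finset.mem_Iic]
  constructor
  · rintro ⟨hk, hlam, rfl⟩
    refine ⟨⟨⟨hk, ?_⟩, hlam, le_trans ?_ hbd⟩, rfl⟩
    · have := Finsupp.degree_mono hbd
      rw [map_nsmul, smul_eq_mul] at this
      nlinarith [Nat.pos_of_ne_zero (mt (Finsupp.degree_eq_zero_iff lam).mp hlam)]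
    · obtain ⟨j, rfl⟩ := Nat.exists_eq_add_of_lt hk
      rw [add_smul, one_smul]
      exact le_add_self
  · rintro ⟨⟨⟨hk, -⟩, hlam, -⟩, rfl⟩
    exact ⟨hk, hlam, rfl⟩

theorem logDerivSeries_sub_trunc_mem [DecidableEq (σ →₀ ℕ)] (d : σ →₀ ℕ) :
    logDerivSeries c m -
        logDerivSeriesTrunc c m d.degree ((open Classical in Finset.Iic d).erase 0) ∈
      vanishingOnIic d := by
  classical
  intro b hb
  rw [map_sub, sub_eq_zero, coeff_logDerivSeries, setOf_eq_nsmul_eq_filter hb,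
    finsum_mem_coe_finset, Finset.sum_filter, logDerivSeriesTrunc, map_neg, map_sum]
  simp only [coeff_monomial]
  congr! 3

theorem degreeDerivation_eq_mul_logDerivSeries [DecidableEq (σ →₀ ℕ)]
    {f : MvPowerSeries σ R}
    (hf : ∀ d, coeff d f = coeff d (productForm c m ((open Classical in Finset.Iic d).erase 0))) :
    degreeDerivation f = f * logDerivSeries c m := by
  ext d
  set S := (open Classical in Finset.Iic d).erase 0
  have hS : ∀ lam ∈ S, lam ≠ 0 := fun lam => Finset.ne_of_mem_erase
  let π := Ideal.Quotient.mk (vanishingOnIic (R := R) d)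
  have hfS := sub_productForm_mem_vanishingOnIic c m hf d
  have hDf : π (degreeDerivation f) = π (degreeDerivation (productForm c m S)) := by
    rw [Ideal.Quotient.eq, ← map_sub]
    exact degreeDerivation_mem_vanishingOnIic hfS
  have hW := Ideal.Quotient.eq.mpr (productFormLogDeriv_sub_trunc_mem c m (d := d) hS)
  have hh := Ideal.Quotient.eq.mpr (logDerivSeries_sub_trunc_mem c m d)
  have : π (degreeDerivation f) = π (f * logDerivSeries c m) := by
    rw [hDf, degreeDerivation_productForm c m hS, map_mul, map_mul, Ideal.Quotient.eq.mpr hfS,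
      hW, hh]
  rw [← sub_eq_zero, ← map_sub]
  exact Ideal.Quotient.eq.mp this d le_rfl

end ProductForm

end MvPowerSeries

theorem stmt_8_general (σ : Type*) [Fintype σ]
    (f : MvPowerSeries σ (Polynomial ℤ))
    (m : (σ →₀ ℕ) → (ℕ →₀ ℤ))
    (hm : ∀ d : σ →₀ ℕ, MvPowerSeries.coeff (R := Polynomial ℤ) d f =
      MvPowerSeries.coeff (R := Polynomial ℤ) d
        (∏ lam ∈ (open Classical in Finset.Iic d).erase 0, ∏ n ∈ (m lam).support,
          zpowSeries (1 - MvPowerSeries.monomial (R := Polynomial ℤ) lam (Polynomial.X ^ n))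
            (m lam n))) :
    ∃ h : MvPowerSeries σ (Polynomial ℤ),
      MvPowerSeries.coeff (R := Polynomial ℤ) 0 h = 0 ∧
      (∀ d : σ →₀ ℕ, d ≠ 0 →
        MvPowerSeries.coeff (R := Polynomial ℤ) d h =
          -∑ᶠ p ∈ {p : ℕ × (σ →₀ ℕ) | 0 < p.1 ∧ p.2 ≠ 0 ∧ d = p.1 • p.2},
            (htv p.2 : Polynomial ℤ) *
              ((m p.2).sum fun n c => c • (Polynomial.X : Polynomial ℤ) ^ (p.1 * n))) ∧
      (∀ d : σ →₀ ℕ,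
        (htv d : Polynomial ℤ) * MvPowerSeries.coeff (R := Polynomial ℤ) d f =
          MvPowerSeries.coeff (R := Polynomial ℤ) d (f * h)) := by
  refine ⟨MvPowerSeries.logDerivSeries (fun n => Polynomial.X ^ n) m,
    MvPowerSeries.coeff_zero_logDerivSeries _ _, fun d _ => ?_, fun d => ?_⟩
  · simp_rw [MvPowerSeries.coeff_logDerivSeries, pow_mul']
    rfl
  · rw [← MvPowerSeries.degreeDerivation_eq_mul_logDerivSeries _ m hm]
    rfl

/-- **Logarithmic derivative of the product form** (proof of Theorem 5.1): if
`f ∈ MvPowerSeries σ ℤ[t]` has constant coefficient `1` and product-form exponent family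
`m` (i.e. `f = ∏_{λ≠0}∏_{n≥0} (1 - tⁿX^λ)^{m(λ,n)}` coefficientwise), and `D` is the
operator with `coeff d (D f) = ht(d)·coeff d f`, then `D f = f * h`, where `h` has
constant coefficient `0` and coefficient at each nonzero `d` equal to
`-∑_{(k,κ) : 0<k, κ≠0, d = k·κ} ht(κ) · ∑_{n} m(κ,n) t^{k·n}`. -/
theorem stmt_8 (σ : Type*) [Fintype σ]
    (f : MvPowerSeries σ (Polynomial ℤ))
    (hf : MvPowerSeries.constantCoeff (σ := σ) (R := Polynomial ℤ) f = 1)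
    (m : (σ →₀ ℕ) → (ℕ →₀ ℤ)) (hm0 : m 0 = 0)
    (hm : ∀ d : σ →₀ ℕ, MvPowerSeries.coeff (R := Polynomial ℤ) d f =
      MvPowerSeries.coeff (R := Polynomial ℤ) d
        (∏ lam ∈ (open Classical in Finset.Iic d).erase 0, ∏ n ∈ (m lam).support,
          zpowSeries (1 - MvPowerSeries.monomial (R := Polynomial ℤ) lam (Polynomial.X ^ n))
            (m lam n))) :
    ∃ h : MvPowerSeries σ (Polynomial ℤ),
      MvPowerSeries.coeff (R := Polynomial ℤ) 0 h = 0 ∧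
      (∀ d : σ →₀ ℕ, d ≠ 0 →
        MvPowerSeries.coeff (R := Polynomial ℤ) d h =
          -∑ᶠ p ∈ {p : ℕ × (σ →₀ ℕ) | 0 < p.1 ∧ p.2 ≠ 0 ∧ d = p.1 • p.2},
            (htv p.2 : Polynomial ℤ) *
              ((m p.2).sum fun n c => c • (Polynomial.X : Polynomial ℤ) ^ (p.1 * n))) ∧
      (∀ d : σ →₀ ℕ,
        (htv d : Polynomial ℤ) * MvPowerSeries.coeff (R := Polynomial ℤ) d f =
          MvPowerSeries.coeff (R := Polynomial ℤ) d (f * h)) :=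
  stmt_8_general σ f m hm
end

section
/- Let α be a type, s a nonempty multiset over α, and a an element of s. Then s.card multiplied by the number of lists l : List α whose underlying multiset is s and whose first entry is a, equals (the multiplicity of a in s) multiplied by the total number of lists whose underlying multiset is s. (Both sets of lists are finite.) -/
/-!
Count the pairs `(l, i)` where `l` is an ordering of `s` and `l[i] = a`. Each ordering has
`count a s` positions carrying `a`. On the other hand, rotating by `i` permutes the orderings of
`s` and moves the entry at position `i` to the front, so for each of the `card s` positions there
are exactly as many orderings with `a` there as orderings starting with `a`.
-/

open Finset

theorem List.card_filter_getElem?_eq_count {α : Type*} [DecidableEq α] (l : List α) (a : α) :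
    #{i ∈ Finset.range l.length | l[i]? = some a} = l.count a := by
  induction l with
  | nil => simp
  | cons b l ih =>
    rw [Finset.card_filter, length_cons, Finset.sum_range_succ']
    simp only [getElem?_cons_succ, getElem?_cons_zero, ← Finset.card_filter, ih, count_cons]
    by_cases h : b = a <;> simp [h]

namespace Multiset

variable {α : Type*} [DecidableEq α]

noncomputable def orderings (s : Multiset α) : Finset (List α) :=
  s.toList.permutations.toFinset

variable {s : Multiset α} {l : List α}

@[simp]
theorem mem_orderings : l ∈ s.orderings ↔ (l : Multiset α) = s := by
  rw [orderings, List.mem_toFinset, List.mem_permutations, ← coe_eq_coe, coe_toList]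

theorem coe_orderings (s : Multiset α) :
    (s.orderings : Set (List α)) = {l : List α | (l : Multiset α) = s} :=
  Set.ext fun _ => mem_orderings

theorem length_of_mem_orderings (hl : l ∈ s.orderings) : l.length = card s := by
  rw [← mem_orderings.1 hl, coe_card]

theorem rotate_mem_orderings (hl : l ∈ s.orderings) (n : ℕ) : l.rotate n ∈ s.orderings := by
  rw [mem_orderings, ← mem_orderings.1 hl, coe_eq_coe]
  exact l.rotate_perm n

theorem card_filter_getElem?_orderings {i : ℕ} (hi : i < card s) (a : α) :
    #{l ∈ s.orderings | l[i]? = some a} = #{l ∈ s.orderings | l.head? = some a} := by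
  have rotate_rotate_sub {l : List α} (hl : l ∈ s.orderings) {j k : ℕ} (hjk : j + k = card s) :
      (l.rotate j).rotate k = l := by
    rw [List.rotate_rotate, hjk, ← length_of_mem_orderings hl, List.rotate_length]
  have head?_rotate {l : List α} (hl : l ∈ s.orderings) : (l.rotate i).head? = l[i]? :=
    List.head?_rotate (by rwa [length_of_mem_orderings hl])
  refine card_bij' (fun l _ => l.rotate i) (fun l _ => l.rotate (card s - i)) ?_ ?_ ?_ ?_
  · intro l hl
    rw [Finset.mem_filter] at hl ⊢
    exact ⟨rotate_mem_orderings hl.1 i, by rw [head?_rotate hl.1, hl.2]⟩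
  · intro l hl
    rw [Finset.mem_filter] at hl ⊢
    have hl' := rotate_mem_orderings hl.1 (card s - i)
    refine ⟨hl', ?_⟩
    rw [← head?_rotate hl', rotate_rotate_sub hl.1 (Nat.sub_add_cancel hi.le), hl.2]
  · intro l hl
    exact rotate_rotate_sub (Finset.mem_filter.1 hl).1 (Nat.add_sub_cancel' hi.le)
  · intro l hl
    exact rotate_rotate_sub (Finset.mem_filter.1 hl).1 (Nat.sub_add_cancel hi.le)

theorem card_mul_card_orderings_head?_eq (s : Multiset α) (a : α) :
    card s * #{l ∈ s.orderings | l.head? = some a} = s.count a * #s.orderings :=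
  calc card s * #{l ∈ s.orderings | l.head? = some a}
      = ∑ i ∈ Finset.range (card s), #{l ∈ s.orderings | l[i]? = some a} := by
        rw [sum_congr rfl fun i hi => card_filter_getElem?_orderings (mem_range.1 hi) a,
          sum_const, Finset.card_range, smul_eq_mul]
    _ = ∑ l ∈ s.orderings, #{i ∈ Finset.range (card s) | l[i]? = some a} :=
        (sum_card_bipartiteAbove_eq_sum_card_bipartiteBelow (fun l i => l[i]? = some a)).symm
    _ = s.count a * #s.orderings := by
        rw [sum_congr rfl fun l hl => by
          rw [← length_of_mem_orderings hl, List.card_filter_getElem?_eq_count, ← coe_count,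
            mem_orderings.1 hl],
          sum_const, smul_eq_mul, mul_comm]

end Multiset

theorem stmt_12_general (α : Type*) [DecidableEq α] (s : Multiset α) (a : α) :
    {l : List α | (l : Multiset α) = s}.Finite ∧
    {l : List α | (l : Multiset α) = s ∧ l.head? = some a}.Finite ∧
    Multiset.card s * {l : List α | (l : Multiset α) = s ∧ l.head? = some a}.ncard =
      s.count a * {l : List α | (l : Multiset α) = s}.ncard := by
  have hheads : {l : List α | (l : Multiset α) = s ∧ l.head? = some a} =
      ↑{l ∈ s.orderings | l.head? = some a} := by
    ext; simp
  rw [hheads, ← s.coe_orderings, Set.ncard_coe_finset, Set.ncard_coe_finset]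
  exact ⟨finite_toSet _, finite_toSet _, s.card_mul_card_orderings_head?_eq a⟩

/-- **Counting orderings of a multiset with prescribed first entry** (proof of Theorem
5.1): for a nonempty multiset `s` over `α` and `a ∈ s`, both the set of lists representing
`s` and the subset of those starting with `a` are finite, and
`|s| · #{lists l with ↑l = s and first entry a} = (multiplicity of a in s) · #{lists l with ↑l = s}`. -/
theorem stmt_12 (α : Type*) [DecidableEq α] (s : Multiset α) (hs : s ≠ 0) (a : α) (ha : a ∈ s) :
    {l : List α | (l : Multiset α) = s}.Finite ∧
    {l : List α | (l : Multiset α) = s ∧ l.head? = some a}.Finite ∧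
    Multiset.card s * {l : List α | (l : Multiset α) = s ∧ l.head? = some a}.ncard =
      s.count a * {l : List α | (l : Multiset α) = s}.ncard :=
  stmt_12_general α s a
end

section
/- Let α be a type, w : α → ℕ a weight function, and s a nonempty multiset over α. Then s.card multiplied by the sum, over all lists l : List α whose underlying multiset is s, of w(first entry of l), equals (∑_{a ∈ s} w(a), the sum of w over s with multiplicity) multiplied by the total number of lists whose underlying multiset is s. -/
/-!
Every rotation of an ordering of `s` is again an ordering of `s`, and rotating by a fixed `k`
permutes the orderings. Hence `|s| · ∑_l w(head l) = ∑_l ∑_{k < |s|} w(head (rotate k l))`, and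
the inner sum runs through every entry of `l` exactly once, so it equals `∑_{a ∈ s} w a`.
-/

open Finset

theorem List.sum_range_headI_rotate {M : Type*} [AddCommMonoid M] [Inhabited M] (l : List M) :
    ∑ k ∈ Finset.range l.length, (l.rotate k).headI = l.sum := by
  rw [Finset.sum_range, ← Fin.sum_univ_getElem]
  refine sum_congr rfl fun k _ => ?_
  have head_rotate := List.head?_rotate k.isLt
  rw [List.getElem?_eq_getElem k.isLt] at head_rotate
  cases h : l.rotate k <;> simp_all

theorem Finset.sum_comp_rotate {α M : Type*} [AddCommMonoid M] {S : Finset (List α)}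
    (hS : ∀ l ∈ S, ∀ k, l.rotate k ∈ S) (k : ℕ) (g : List α → M) :
    ∑ l ∈ S, g (l.rotate k) = ∑ l ∈ S, g l :=
  sum_nbij' (fun l => l.rotate k) (fun l => l.rotate (l.length - k % l.length))
    (fun l hl => hS l hl _) (fun l hl => hS l hl _) (fun _ _ => (List.rotate_eq_iff.1 rfl).symm)
    (fun _ _ => List.rotate_eq_iff.2 rfl) fun _ _ => rfl

namespace Multiset

variable {α : Type*} [DecidableEq α]

theorem mem_toFinset_lists {s : Multiset α} {l : List α} : l ∈ s.lists.toFinset ↔ ↑l = s := by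
  simp [eq_comm]

theorem rotate_mem_toFinset_lists {s : Multiset α} {l : List α} (hl : l ∈ s.lists.toFinset)
    (k : ℕ) : l.rotate k ∈ s.lists.toFinset := by
  rw [mem_toFinset_lists] at hl ⊢
  rw [← hl, coe_eq_coe]
  exact l.rotate_perm k

theorem setOf_coe_eq (s : Multiset α) :
    {l : List α | (l : Multiset α) = s} = s.lists.toFinset :=
  Set.ext fun _ => mem_toFinset_lists.symm

end Multiset

theorem stmt_13_general (α : Type*) (w : α → ℕ) (s : Multiset α) :
    Multiset.card s *
        ∑ᶠ l ∈ {l : List α | (l : Multiset α) = s}, (l.map w).headI =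
      (s.map w).sum * {l : List α | (l : Multiset α) = s}.ncard := by
  classical
  rw [Multiset.setOf_coe_eq, finsum_mem_coe_finset, Set.ncard_coe_finset]
  calc Multiset.card s * ∑ l ∈ s.lists.toFinset, (l.map w).headI
      = ∑ _k ∈ range (Multiset.card s), ∑ l ∈ s.lists.toFinset, (l.map w).headI := by
        rw [sum_const, card_range, smul_eq_mul]
    _ = ∑ k ∈ range (Multiset.card s), ∑ l ∈ s.lists.toFinset, ((l.map w).rotate k).headI :=
        sum_congr rfl fun k _ => by
          rw [← sum_comp_rotate (fun _ => Multiset.rotate_mem_toFinset_lists) k]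
          simp only [List.map_rotate]
    _ = ∑ l ∈ s.lists.toFinset, ∑ k ∈ range (Multiset.card s), ((l.map w).rotate k).headI :=
        sum_comm
    _ = ∑ l ∈ s.lists.toFinset, (s.map w).sum := sum_congr rfl fun l hl => by
        obtain rfl := Multiset.mem_toFinset_lists.1 hl
        simpa using (l.map w).sum_range_headI_rotate
    _ = (s.map w).sum * #s.lists.toFinset := by rw [sum_const, smul_eq_mul, mul_comm]

/-- **Weighted count of orderings of a multiset** (proof of Theorem 5.1, the step showing
the equivalence of the unordered formula (38) and the ordered formula (39)): for a weight
function `w : α → ℕ` and a nonempty multiset `s`,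
`|s| · ∑_{lists l with ↑l = s} w(first entry of l) = (∑_{a ∈ s} w a) · #{lists l with ↑l = s}`.
(The weight of the first entry of `l` is encoded as the head of `l.map w`.) -/
theorem stmt_13 (α : Type*) (w : α → ℕ) (s : Multiset α) (hs : s ≠ 0) :
    Multiset.card s *
        ∑ᶠ l ∈ {l : List α | (l : Multiset α) = s}, (l.map w).headI =
      (s.map w).sum * {l : List α | (l : Multiset α) = s}.ncard :=
  stmt_13_general α w s
end

section
/- Let σ be a finite type, R a commutative ring, A a subset of σ, and let π_A : MvPowerSeries σ R → MvPowerSeries σ R be the map defined by: the coefficient of π_A(f) at an exponent vector d equals the coefficient of f at d if the support of d is contained in A, and 0 otherwise. Let S be an additive submonoid of ℕ^σ and let T = {d ∈ S | support of d ⊆ A} (an additive submonoid). Let f ∈ MvPowerSeries σ R have constant coefficient a unit, and let g be the inverse of f relative to S (i.e. g is supported on S and (f·g)|_S = 1). Then π_A(g) is the inverse of π_A(f) relative to T: π_A(g) is supported on T and (π_A(f)·π_A(g))|_T = 1. -/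
/-! Setting the variables outside `A` to zero is multiplicative and changes no coefficient at
an exponent supported in `A`. Hence `π_A (f * g) = π_A f * π_A g`, and the conditions defining
the inverse relative to `S` restrict to those defining the inverse relative to `T`. -/

/-- Restriction of a multivariate power series to the variables in `A`: the coefficient
at `d` is kept when the support of `d` is contained in `A`, and set to `0` otherwise. -/
noncomputable def restrictVars {σ : Type*} {R : Type*} [CommRing R] (A : Set σ)
    (f : MvPowerSeries σ R) : MvPowerSeries σ R :=
  fun d =>
    {e : σ →₀ ℕ | (e.support : Set σ) ⊆ A}.indicator (fun e => MvPowerSeries.coeff e f) d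

theorem Finsupp.coe_support_add_subset_iff {ι α : Type*} [AddCommMonoid α] [PartialOrder α]
    [CanonicallyOrderedAdd α] [Sub α] [OrderedSub α] {A : Set ι} {a b : ι →₀ α} :
    ((a + b).support : Set ι) ⊆ A ↔ (a.support : Set ι) ⊆ A ∧ (b.support : Set ι) ⊆ A := by
  classical
  rw [Finsupp.support_add_eq_union, Finset.coe_union, Set.union_subset_iff]

section restrictVars

open Finset MvPowerSeries
open scoped Classical

variable {σ R : Type*} [CommRing R] (A : Set σ)

theorem coeff_restrictVars (f : MvPowerSeries σ R) (d : σ →₀ ℕ) :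
    coeff d (restrictVars A f) = if (d.support : Set σ) ⊆ A then coeff d f else 0 := by
  simp only [restrictVars, coeff_apply, Set.indicator, Set.mem_ofPred_eq]

theorem restrictVars_mul (f g : MvPowerSeries σ R) :
    restrictVars A (f * g) = restrictVars A f * restrictVars A g := by
  ext d
  have hterm : ∀ p ∈ antidiagonal d,
      coeff p.1 (restrictVars A f) * coeff p.2 (restrictVars A g) =
        if (d.support : Set σ) ⊆ A then coeff p.1 f * coeff p.2 g else 0 := fun p hp => by
    rw [← mem_antidiagonal.1 hp, coeff_restrictVars, coeff_restrictVars]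
    simp only [ite_zero_mul_ite_zero, Finsupp.coe_support_add_subset_iff]
  rw [coeff_restrictVars, coeff_mul, coeff_mul, sum_congr rfl hterm]
  split_ifs
  exacts [rfl, sum_const_zero.symm]

end restrictVars

theorem stmt_15_general (σ : Type*) (R : Type*) [CommRing R] (A : Set σ)
    (S : AddSubmonoid (σ →₀ ℕ)) (f g : MvPowerSeries σ R)
    (hg_supp : ∀ d : σ →₀ ℕ, d ∉ S → MvPowerSeries.coeff d g = 0)
    (hfg0 : MvPowerSeries.coeff 0 (f * g) = 1)
    (hfg : ∀ d : σ →₀ ℕ, d ∈ S → d ≠ 0 → MvPowerSeries.coeff d (f * g) = 0) :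
    (∀ d : σ →₀ ℕ, ¬(d ∈ S ∧ (d.support : Set σ) ⊆ A) →
      MvPowerSeries.coeff d (restrictVars A g) = 0) ∧
    MvPowerSeries.coeff 0 (restrictVars A f * restrictVars A g) = 1 ∧
    (∀ d : σ →₀ ℕ, d ∈ S → (d.support : Set σ) ⊆ A → d ≠ 0 →
      MvPowerSeries.coeff d (restrictVars A f * restrictVars A g) = 0) := by
  refine ⟨fun d hd => ?_, ?_, fun d hdS hdA hd0 => ?_⟩
  · rw [coeff_restrictVars]
    split_ifs with hdA
    exacts [hg_supp d fun hdS => hd ⟨hdS, hdA⟩, rfl]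
  · rw [← restrictVars_mul, coeff_restrictVars, if_pos (by simp), hfg0]
  · rw [← restrictVars_mul, coeff_restrictVars, if_pos hdA]
    exact hfg d hdS hd0

/-- **Restriction of a relative inverse to a subset of the variables** (core of
Proposition 6.1): let `S` be an additive submonoid of exponent vectors,
`T = {d ∈ S | supp d ⊆ A}`, and let `f` have unit constant coefficient. If `g` is the
inverse of `f` relative to `S` (i.e. `g` is supported on `S` and `(f·g)|_S = 1`), then
`π_A(g)` is the inverse of `π_A(f)` relative to `T`: it is supported on `T` and
`(π_A(f)·π_A(g))|_T = 1`. -/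
theorem stmt_15 (σ : Type*) [Fintype σ] (R : Type*) [CommRing R] (A : Set σ)
    (S : AddSubmonoid (σ →₀ ℕ)) (f g : MvPowerSeries σ R)
    (hf : IsUnit (MvPowerSeries.constantCoeff f))
    (hg_supp : ∀ d : σ →₀ ℕ, d ∉ S → MvPowerSeries.coeff d g = 0)
    (hfg0 : MvPowerSeries.coeff 0 (f * g) = 1)
    (hfg : ∀ d : σ →₀ ℕ, d ∈ S → d ≠ 0 → MvPowerSeries.coeff d (f * g) = 0) :
    (∀ d : σ →₀ ℕ, ¬(d ∈ S ∧ (d.support : Set σ) ⊆ A) →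
      MvPowerSeries.coeff d (restrictVars A g) = 0) ∧
    MvPowerSeries.coeff 0 (restrictVars A f * restrictVars A g) = 1 ∧
    (∀ d : σ →₀ ℕ, d ∈ S → (d.support : Set σ) ⊆ A → d ≠ 0 →
      MvPowerSeries.coeff d (restrictVars A f * restrictVars A g) = 0) :=
  stmt_15_general σ R A S f g hg_supp hfg0 hfg
end

section
/- Let σ be a finite type, R a commutative ring, and A a subset of σ with complement Aᶜ. Let f₁, f₂ ∈ MvPowerSeries σ R have constant coefficient a unit, with f₁ supported on exponent vectors whose support is contained in A and f₂ supported on exponent vectors whose support is contained in Aᶜ. Let S₁, S₂ be additive submonoids of ℕ^σ consisting, respectively, of vectors supported in A and of vectors supported in Aᶜ, and let g₁ be the inverse of f₁ relative to S₁ and g₂ the inverse of f₂ relative to S₂. Then g₁·g₂ is the inverse of f₁·f₂ relative to the additive submonoid S₁ + S₂ = {d₁ + d₂ | d₁ ∈ S₁, d₂ ∈ S₂}: g₁·g₂ is supported on S₁ + S₂ and ((f₁·f₂)·(g₁·g₂))|_{S₁+S₂} = 1. -/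
/-!
Since `(f₁ f₂) (g₁ g₂) = (f₁ g₁) (f₂ g₂)`, where `f₁ g₁` only involves the variables in `A` and
`f₂ g₂` only those in `Aᶜ`, and since an exponent vector splits uniquely into a part supported
in `A` and a part supported in `Aᶜ`, the coefficient of `(f₁ f₂) (g₁ g₂)` at `d₁ + d₂` is the
product of the coefficients of `f₁ g₁` at `d₁` and of `f₂ g₂` at `d₂`.
-/

open MvPowerSeries
open scoped Pointwise

namespace Finsupp

variable {α M : Type*} [AddZeroClass M] {A : Set α}

theorem filter_add_eq_of_support_subset [DecidablePred (· ∈ A)] {e₁ e₂ : α →₀ M}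
    (h₁ : ↑e₁.support ⊆ A) (h₂ : ↑e₂.support ⊆ Aᶜ) : (e₁ + e₂).filter (· ∈ A) = e₁ := by
  rw [filter_add, (filter_eq_self_iff _ _).2 fun x hx => h₁ (mem_support_iff.2 hx),
    (filter_eq_zero_iff _ _).2 fun x hx => not_ne_iff.1 fun h => h₂ (mem_support_iff.2 h) hx,
    add_zero]

theorem eq_and_eq_of_add_eq_add_of_support_subset [IsLeftCancelAdd M] {e₁ e₂ d₁ d₂ : α →₀ M}
    (he₁ : ↑e₁.support ⊆ A) (he₂ : ↑e₂.support ⊆ Aᶜ)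
    (hd₁ : ↑d₁.support ⊆ A) (hd₂ : ↑d₂.support ⊆ Aᶜ) (h : e₁ + e₂ = d₁ + d₂) :
    e₁ = d₁ ∧ e₂ = d₂ := by
  classical
  have h₁ : e₁ = d₁ := by
    rw [← filter_add_eq_of_support_subset he₁ he₂, h, filter_add_eq_of_support_subset hd₁ hd₂]
  exact ⟨h₁, add_left_cancel (h₁ ▸ h)⟩

end Finsupp

namespace MvPowerSeries

variable {σ R : Type*} [Semiring R]

theorem coeff_mul_eq_zero_of_notMem_add {P Q : Set (σ →₀ ℕ)} {f g : MvPowerSeries σ R}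
    (hf : ∀ d ∉ P, coeff d f = 0) (hg : ∀ d ∉ Q, coeff d g = 0) {d : σ →₀ ℕ}
    (hd : d ∉ P + Q) : coeff d (f * g) = 0 := by
  classical
  rw [coeff_mul]
  refine Finset.sum_eq_zero fun ⟨e₁, e₂⟩ he => ?_
  by_cases h₁ : e₁ ∈ P
  · by_cases h₂ : e₂ ∈ Q
    · exact absurd (Set.add_mem_add h₁ h₂) (Finset.HasAntidiagonal.mem_antidiagonal.1 he ▸ hd)
    · rw [hg e₂ h₂, mul_zero]
  · rw [hf e₁ h₁, zero_mul]

theorem coeff_mul_eq_zero_of_support_not_subset {B : Set σ} {f g : MvPowerSeries σ R}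
    (hf : ∀ d : σ →₀ ℕ, ¬ ↑d.support ⊆ B → coeff d f = 0)
    (hg : ∀ d : σ →₀ ℕ, ¬ ↑d.support ⊆ B → coeff d g = 0) :
    ∀ d : σ →₀ ℕ, ¬ ↑d.support ⊆ B → coeff d (f * g) = 0 := by
  classical
  intro d hd
  refine coeff_mul_eq_zero_of_notMem_add (P := {d | ↑d.support ⊆ B}) (Q := {d | ↑d.support ⊆ B})
    hf hg ?_
  rintro ⟨e₁, he₁, e₂, he₂, rfl⟩
  have hsupp : ↑(e₁ + e₂).support ⊆ (↑e₁.support ∪ ↑e₂.support : Set σ) := by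
    exact_mod_cast Finsupp.support_add
  exact hd (hsupp.trans (Set.union_subset he₁ he₂))

theorem coeff_add_mul_of_support_subset {A : Set σ} {f g : MvPowerSeries σ R}
    (hf : ∀ d : σ →₀ ℕ, ¬ ↑d.support ⊆ A → coeff d f = 0)
    (hg : ∀ d : σ →₀ ℕ, ¬ ↑d.support ⊆ Aᶜ → coeff d g = 0)
    {d₁ d₂ : σ →₀ ℕ} (hd₁ : ↑d₁.support ⊆ A) (hd₂ : ↑d₂.support ⊆ Aᶜ) :
    coeff (d₁ + d₂) (f * g) = coeff d₁ f * coeff d₂ g := by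
  classical
  rw [coeff_mul,
    Finset.sum_eq_single_of_mem (d₁, d₂) (Finset.HasAntidiagonal.mem_antidiagonal.2 rfl)]
  rintro ⟨e₁, e₂⟩ he hne
  by_cases he₁ : ↑e₁.support ⊆ A
  · by_cases he₂ : ↑e₂.support ⊆ Aᶜ
    · obtain ⟨rfl, rfl⟩ := Finsupp.eq_and_eq_of_add_eq_add_of_support_subset he₁ he₂ hd₁ hd₂
        (Finset.HasAntidiagonal.mem_antidiagonal.1 he)
      exact absurd rfl hne
    · rw [hg e₂ he₂, mul_zero]
  · rw [hf e₁ he₁, zero_mul]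

end MvPowerSeries

theorem stmt_16_general (σ : Type*) (R : Type*) [CommRing R] (A : Set σ)
    (f₁ f₂ g₁ g₂ : MvPowerSeries σ R)
    (S₁ S₂ : AddSubmonoid (σ →₀ ℕ))
    (hf₁supp : ∀ d : σ →₀ ℕ, ¬ ((d.support : Set σ) ⊆ A) →
      MvPowerSeries.coeff d f₁ = 0)
    (hf₂supp : ∀ d : σ →₀ ℕ, ¬ ((d.support : Set σ) ⊆ Aᶜ) →
      MvPowerSeries.coeff d f₂ = 0)
    (hS₁ : ∀ d ∈ S₁, (d.support : Set σ) ⊆ A)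
    (hS₂ : ∀ d ∈ S₂, (d.support : Set σ) ⊆ Aᶜ)
    (hg₁supp : ∀ d : σ →₀ ℕ, d ∉ S₁ → MvPowerSeries.coeff d g₁ = 0)
    (hg₁0 : MvPowerSeries.coeff 0 (f₁ * g₁) = 1)
    (hg₁ : ∀ d : σ →₀ ℕ, d ∈ S₁ → d ≠ 0 → MvPowerSeries.coeff d (f₁ * g₁) = 0)
    (hg₂supp : ∀ d : σ →₀ ℕ, d ∉ S₂ → MvPowerSeries.coeff d g₂ = 0)
    (hg₂0 : MvPowerSeries.coeff 0 (f₂ * g₂) = 1)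
    (hg₂ : ∀ d : σ →₀ ℕ, d ∈ S₂ → d ≠ 0 → MvPowerSeries.coeff d (f₂ * g₂) = 0) :
    (∀ d : σ →₀ ℕ, ¬ (∃ d₁ ∈ S₁, ∃ d₂ ∈ S₂, d = d₁ + d₂) →
      MvPowerSeries.coeff d (g₁ * g₂) = 0) ∧
    MvPowerSeries.coeff 0 ((f₁ * f₂) * (g₁ * g₂)) = 1 ∧
    (∀ d : σ →₀ ℕ, (∃ d₁ ∈ S₁, ∃ d₂ ∈ S₂, d = d₁ + d₂) → d ≠ 0 →
      MvPowerSeries.coeff d ((f₁ * f₂) * (g₁ * g₂)) = 0) := by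
  have hmul : (f₁ * f₂) * (g₁ * g₂) = (f₁ * g₁) * (f₂ * g₂) := by ring
  have hfg₁ := coeff_mul_eq_zero_of_support_not_subset hf₁supp
    fun d hd => hg₁supp d (mt (hS₁ d) hd)
  have hfg₂ := coeff_mul_eq_zero_of_support_not_subset hf₂supp
    fun d hd => hg₂supp d (mt (hS₂ d) hd)
  refine ⟨fun d hd => coeff_mul_eq_zero_of_notMem_add hg₁supp hg₂supp
    fun ⟨d₁, hd₁, d₂, hd₂, h⟩ => hd ⟨d₁, hd₁, d₂, hd₂, h.symm⟩, ?_, ?_⟩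
  · rw [hmul, coeff_zero_eq_constantCoeff, map_mul, ← coeff_zero_eq_constantCoeff, hg₁0, hg₂0,
      one_mul]
  · rintro d ⟨d₁, hd₁, d₂, hd₂, rfl⟩ hd
    rw [hmul, coeff_add_mul_of_support_subset hfg₁ hfg₂ (hS₁ d₁ hd₁) (hS₂ d₂ hd₂)]
    rcases eq_or_ne d₁ 0 with rfl | h₁
    · rw [hg₂ d₂ hd₂ (by simpa using hd), mul_zero]
    · rw [hg₁ d₁ hd₁ h₁, zero_mul]

/-- **Relative inverses multiply over a decomposition of the variables** (core of
Proposition 6.2): let `A ⊆ σ`, let `f₁, f₂` have unit constant coefficients and be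
supported on exponent vectors supported in `A`, resp. in `Aᶜ`; let `S₁, S₂` be additive
submonoids of exponent vectors supported in `A`, resp. `Aᶜ`, and let `gᵢ` be the inverse
of `fᵢ` relative to `Sᵢ`. Then `g₁·g₂` is the inverse of `f₁·f₂` relative to `S₁ + S₂`:
it is supported on `S₁ + S₂` and `((f₁·f₂)·(g₁·g₂))|_{S₁+S₂} = 1`. -/
theorem stmt_16 (σ : Type*) [Fintype σ] (R : Type*) [CommRing R] (A : Set σ)
    (f₁ f₂ g₁ g₂ : MvPowerSeries σ R)
    (S₁ S₂ : AddSubmonoid (σ →₀ ℕ))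
    (hf₁ : IsUnit (MvPowerSeries.constantCoeff f₁))
    (hf₂ : IsUnit (MvPowerSeries.constantCoeff f₂))
    (hf₁supp : ∀ d : σ →₀ ℕ, ¬ ((d.support : Set σ) ⊆ A) →
      MvPowerSeries.coeff d f₁ = 0)
    (hf₂supp : ∀ d : σ →₀ ℕ, ¬ ((d.support : Set σ) ⊆ Aᶜ) →
      MvPowerSeries.coeff d f₂ = 0)
    (hS₁ : ∀ d ∈ S₁, (d.support : Set σ) ⊆ A)
    (hS₂ : ∀ d ∈ S₂, (d.support : Set σ) ⊆ Aᶜ)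
    (hg₁supp : ∀ d : σ →₀ ℕ, d ∉ S₁ → MvPowerSeries.coeff d g₁ = 0)
    (hg₁0 : MvPowerSeries.coeff 0 (f₁ * g₁) = 1)
    (hg₁ : ∀ d : σ →₀ ℕ, d ∈ S₁ → d ≠ 0 → MvPowerSeries.coeff d (f₁ * g₁) = 0)
    (hg₂supp : ∀ d : σ →₀ ℕ, d ∉ S₂ → MvPowerSeries.coeff d g₂ = 0)
    (hg₂0 : MvPowerSeries.coeff 0 (f₂ * g₂) = 1)
    (hg₂ : ∀ d : σ →₀ ℕ, d ∈ S₂ → d ≠ 0 → MvPowerSeries.coeff d (f₂ * g₂) = 0) :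
    (∀ d : σ →₀ ℕ, ¬ (∃ d₁ ∈ S₁, ∃ d₂ ∈ S₂, d = d₁ + d₂) →
      MvPowerSeries.coeff d (g₁ * g₂) = 0) ∧
    MvPowerSeries.coeff 0 ((f₁ * f₂) * (g₁ * g₂)) = 1 ∧
    (∀ d : σ →₀ ℕ, (∃ d₁ ∈ S₁, ∃ d₂ ∈ S₂, d = d₁ + d₂) → d ≠ 0 →
      MvPowerSeries.coeff d ((f₁ * f₂) * (g₁ * g₂)) = 0) :=
  stmt_16_general σ R A f₁ f₂ g₁ g₂ S₁ S₂ hf₁supp hf₂supp hS₁ hS₂ hg₁supp hg₁0 hg₁ hg₂supp hg₂0 hg₂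
end
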